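/- arXiv:math/0504360 — 7 statements merged into one kernel-verified Lean document; each statement's English description precedes it below -/
import Mathlib

section
/- Let G̃ ⊆ GL(2,ℂ) be a finite subgroup containing −I, acting on ℂ[x,y] by g·f = f ∘ g⁻¹, and let I ⊆ ℂ[x,y] be a G̃-cluster. Set J = σ⁻¹(I) ⊆ ℂ[a,b,c]. Then the ring homomorphism ℂ[a,b,c]/J → ℂ[x,y]/I induced by σ is injective, its image is the subring of ℂ[x,y]/I fixed by the automorphism induced by −I, and dim_ℂ (ℂ[a,b,c]/J) = |G̃|/2. Moreover, if I ⊆ ⟨x,y⟩ then J ⊆ ⟨a,b,c⟩. -/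
open MvPolynomial

/-- The action of `g ∈ GL(n,ℂ)` on polynomials by `g · f = f ∘ g⁻¹`: the variable `Xᵢ`
is substituted by the `i`-th coordinate of `g⁻¹ · X`. -/
noncomputable def actGL {n : ℕ} (g : GL (Fin n) ℂ) :
    MvPolynomial (Fin n) ℂ →ₐ[ℂ] MvPolynomial (Fin n) ℂ :=
  aeval fun i => ∑ j, ((g⁻¹ : GL (Fin n) ℂ) : Matrix (Fin n) (Fin n) ℂ) i j • X j

/-- The ℂ-algebra homomorphism `σ : ℂ[a,b,c] → ℂ[x,y]` with `σ(a)=x²`, `σ(b)=y²`,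
`σ(c)=xy`. -/
noncomputable def sigmaHom : MvPolynomial (Fin 3) ℂ →ₐ[ℂ] MvPolynomial (Fin 2) ℂ :=
  aeval ![X 0 ^ 2, X 1 ^ 2, X 0 * X 1]

/-!
`σ` identifies `ℂ[a,b,c]` with the even polynomials, i.e. the fixed ring of
`negX : f(x,y) ↦ f(-x,-y)`, which is the action of `-I`. Modulo a `-I`-stable ideal, a class
fixed by `-I` is represented by the even polynomial `(f + negX f)/2`, so `ℂ[a,b,c]/J` maps
isomorphically onto the fixed subspace of `-I` in `ℂ[x,y]/I`. On the regular representation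
`-I` acts by left multiplication with a group element `≠ 1`, which has trace `0`; being an
involution, its fixed subspace therefore has dimension `(|G̃| + 0)/2`. Finally, `σ` preserves
constant coefficients, so `σ⁻¹⟨x,y⟩ = ⟨a,b,c⟩`.
-/

section NegX

variable {ι R : Type*} [CommRing R]

noncomputable def negX : MvPolynomial ι R →ₐ[R] MvPolynomial ι R :=
  aeval fun i => -X i

lemma negX_negX (f : MvPolynomial ι R) : negX (negX f) = f := by
  have h : (negX : MvPolynomial ι R →ₐ[R] _).comp negX = AlgHom.id R _ :=
    algHom_ext fun i => by simp [negX]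
  exact AlgHom.congr_fun h f

lemma negX_monomial (d : ι →₀ ℕ) (c : R) :
    negX (monomial d c) = (-1 : R) ^ d.degree • monomial d c := by
  have hsign : (d.prod fun _ k => (-1 : MvPolynomial ι R) ^ k) = C ((-1) ^ d.degree) := by
    rw [Finsupp.prod, Finset.prod_pow_eq_pow_sum, Finsupp.degree_apply]; simp
  rw [negX, aeval_monomial, monomial_eq, smul_eq_C_mul]
  simp_rw [neg_pow (X _ : MvPolynomial ι R), Finsupp.prod_mul, hsign, algebraMap_eq]
  ring

lemma coeff_negX (f : MvPolynomial ι R) (d : ι →₀ ℕ) :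
    coeff d (negX f) = (-1) ^ d.degree * coeff d f := by
  induction f using MvPolynomial.induction_on' with
  | monomial e c =>
    classical
    rw [negX_monomial, coeff_smul, coeff_monomial, smul_eq_mul]
    split_ifs with h <;> simp [h]
  | add p q hp hq => rw [map_add, coeff_add, coeff_add, mul_add, hp, hq]

end NegX

lemma mem_idealOfVars_iff {ι R : Type*} [CommSemiring R] (p : MvPolynomial ι R) :
    p ∈ idealOfVars ι R ↔ constantCoeff p = 0 := by
  simpa [Finsupp.degree_eq_zero_iff, constantCoeff_eq] using mem_pow_idealOfVars_iff' 1 p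

lemma actGL_neg_one {n : ℕ} : actGL (-1 : GL (Fin n) ℂ) = negX := by
  refine algHom_ext fun i => ?_
  simp [actGL, negX, Matrix.one_apply]

lemma negX_sigmaHom (p : MvPolynomial (Fin 3) ℂ) : negX (sigmaHom p) = sigmaHom p := by
  have h : negX.comp sigmaHom = sigmaHom :=
    algHom_ext fun i => by fin_cases i <;> simp [sigmaHom, negX]
  exact AlgHom.congr_fun h p

lemma constantCoeff_sigmaHom (p : MvPolynomial (Fin 3) ℂ) :
    constantCoeff (sigmaHom p) = constantCoeff p := by
  have h : constantCoeff.comp (sigmaHom : MvPolynomial (Fin 3) ℂ →+* MvPolynomial (Fin 2) ℂ) =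
      constantCoeff :=
    ringHom_ext (fun c => by simp [sigmaHom]) fun i => by fin_cases i <;> simp [sigmaHom]
  exact RingHom.congr_fun h p

lemma comap_sigmaHom_idealOfVars :
    (idealOfVars (Fin 2) ℂ).comap sigmaHom = idealOfVars (Fin 3) ℂ := by
  ext p
  rw [Ideal.mem_comap, mem_idealOfVars_iff, mem_idealOfVars_iff, constantCoeff_sigmaHom]

lemma monomial_mem_range_sigmaHom {d : Fin 2 →₀ ℕ} (hd : Even d.degree) (c : ℂ) :
    monomial d c ∈ sigmaHom.range := by
  rw [Finsupp.degree_eq_sum, Fin.sum_univ_two, Nat.even_add] at hd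
  have hmono : monomial d c = C c * X 0 ^ d 0 * X 1 ^ d 1 := by
    rw [monomial_eq, Finsupp.prod_fintype _ _ fun _ => pow_zero _, Fin.prod_univ_two, mul_assoc]
  rcases Nat.even_or_odd (d 0) with ⟨k, hk⟩ | ⟨k, hk⟩
  · obtain ⟨l, hl⟩ := hd.mp ⟨k, hk⟩
    refine ⟨C c * X 0 ^ k * X 1 ^ l, ?_⟩
    simp [hmono, sigmaHom, hk, hl]
    ring
  · obtain ⟨l, hl⟩ : Odd (d 1) := by
      rw [← Nat.not_even_iff_odd, ← hd, Nat.not_even_iff_odd]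
      exact ⟨k, hk⟩
    refine ⟨C c * X 0 ^ k * X 1 ^ l * X 2, ?_⟩
    simp [hmono, sigmaHom, hk, hl]
    ring

lemma mem_range_sigmaHom_iff (f : MvPolynomial (Fin 2) ℂ) :
    f ∈ sigmaHom.range ↔ negX f = f := by
  refine ⟨fun ⟨p, hp⟩ => hp ▸ negX_sigmaHom p, fun hf => ?_⟩
  have heven : ∀ d ∈ f.support, Even d.degree := by
    intro d hd
    by_contra hodd
    have hcoeff := coeff_negX f d
    rw [hf, (Nat.not_even_iff_odd.mp hodd).neg_one_pow, neg_one_mul,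
      CharZero.eq_neg_self_iff] at hcoeff
    exact mem_support_iff.mp hd hcoeff
  rw [← f.support_sum_monomial_coeff]
  exact Subalgebra.sum_mem _ fun d hd => monomial_mem_range_sigmaHom (heven d hd) _

section Quotient

variable {I : Ideal (MvPolynomial (Fin 2) ℂ)}

lemma mk_mem_range_quotientMap_sigmaHom_iff (hI : I ≤ I.comap negX)
    (f : MvPolynomial (Fin 2) ℂ) :
    Ideal.Quotient.mk I f ∈ Set.range (Ideal.quotientMap I
        (sigmaHom : MvPolynomial (Fin 3) ℂ →+* MvPolynomial (Fin 2) ℂ) le_rfl) ↔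
      Ideal.Quotient.mk I (negX f) = Ideal.Quotient.mk I f := by
  constructor
  · rintro ⟨q, hq⟩
    obtain ⟨p, rfl⟩ := Ideal.Quotient.mk_surjective q
    rw [Ideal.quotientMap_mk, RingHom.coe_coe, Ideal.Quotient.eq] at hq
    have hneg := hI hq
    rw [Ideal.mem_comap, map_sub, negX_sigmaHom] at hneg
    rw [Ideal.Quotient.eq]
    convert I.sub_mem hq hneg using 1
    ring
  · intro hf
    -- the average of `f` and `negX f` is `negX`-invariant and agrees with `f` modulo `I`
    have heven : (2⁻¹ : ℂ) • (f + negX f) ∈ sigmaHom.range := by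
      rw [mem_range_sigmaHom_iff, map_smul, map_add, negX_negX, add_comm]
    obtain ⟨p, hp⟩ := (AlgHom.mem_range _).mp heven
    refine ⟨Ideal.Quotient.mk _ p, ?_⟩
    rw [Ideal.quotientMap_mk, RingHom.coe_coe, hp, Ideal.Quotient.eq]
    convert I.mul_mem_left (C 2⁻¹) (Ideal.Quotient.eq.mp hf) using 1
    rw [← smul_eq_C_mul]
    module

lemma finrank_quotient_comap_sigmaHom (hI : I ≤ I.comap negX) :
    Module.finrank ℂ (MvPolynomial (Fin 3) ℂ ⧸ I.comap
        (sigmaHom : MvPolynomial (Fin 3) ℂ →+* MvPolynomial (Fin 2) ℂ)) =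
      Module.finrank ℂ (LinearMap.ker ((Ideal.quotientMapₐ I negX hI).toLinearMap - 1)) := by
  let φ := (Ideal.quotientMapₐ I sigmaHom le_rfl).toLinearMap
  have hrange : LinearMap.range φ =
      LinearMap.ker ((Ideal.quotientMapₐ I negX hI).toLinearMap - 1) := by
    ext x
    obtain ⟨f, rfl⟩ := Ideal.Quotient.mk_surjective x
    rw [LinearMap.mem_ker, LinearMap.sub_apply, sub_eq_zero]
    exact mk_mem_range_quotientMap_sigmaHom_iff hI f
  rw [← hrange]
  exact (LinearEquiv.ofInjective φ Ideal.quotientMap_injective).finrank_eq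

end Quotient

lemma two_mul_finrank_ker_sub_one_eq {K V : Type*} [Field K] [NeZero (2 : K)] [AddCommGroup V]
    [Module K V] [FiniteDimensional K V] {L : Module.End K V} (hL : L * L = 1) :
    (2 * Module.finrank K (LinearMap.ker (L - 1)) : K) =
      Module.finrank K V + LinearMap.trace K V L := by
  have hLL (y : V) : L (L y) = y := by rw [← Module.End.mul_apply, hL, Module.End.one_apply]
  have hproj : LinearMap.IsProj (LinearMap.ker (L - 1)) ((2⁻¹ : K) • (1 + L)) := by
    constructor
    · intro x
      simp only [LinearMap.mem_ker, LinearMap.sub_apply, LinearMap.smul_apply,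
        LinearMap.add_apply, Module.End.one_apply, map_smul, map_add, hLL]
      rw [sub_add_sub_cancel, sub_self, smul_zero]
    · intro x hx
      rw [LinearMap.mem_ker, LinearMap.sub_apply, Module.End.one_apply, sub_eq_zero] at hx
      simp only [LinearMap.smul_apply, LinearMap.add_apply, Module.End.one_apply, hx]
      rw [← two_smul K x, smul_smul, inv_mul_cancel₀ two_ne_zero, one_smul]
  have htrace := hproj.trace
  rw [map_smul, map_add, LinearMap.trace_one, smul_eq_mul] at htrace
  rw [← htrace, ← mul_assoc, mul_inv_cancel₀ two_ne_zero, one_mul]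

lemma MonoidAlgebra.trace_mulLeft_single_eq_zero {k G : Type*} [CommRing k] [Group G]
    [Fintype G] {g : G} (hg : g ≠ 1) (r : k) :
    LinearMap.trace k _ (LinearMap.mulLeft k (MonoidAlgebra.single g r)) = 0 := by
  classical
  rw [LinearMap.trace_eq_matrix_trace k (MonoidAlgebra.basis G k), Matrix.trace]
  refine Finset.sum_eq_zero fun x _ => ?_
  have hx : x ≠ g * x := fun h => hg (mul_eq_right.mp h.symm)
  rw [Matrix.diag_apply, LinearMap.toMatrix_apply]
  simp only [MonoidAlgebra.basis_apply, LinearMap.mulLeft_apply, MonoidAlgebra.single_mul_single,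
    mul_one]
  exact Finsupp.single_eq_of_ne hx

lemma two_mul_finrank_ker_sub_one_eq_card {K G Q : Type*} [Field K] [CharZero K] [Group G]
    [Fintype G] [AddCommGroup Q] [Module K Q] (e : Q ≃ₗ[K] MonoidAlgebra K G) {g : G}
    (hg : g ≠ 1) (hg2 : g * g = 1) {τ : Module.End K Q}
    (hτ : ∀ x, e (τ x) = MonoidAlgebra.single g 1 * e x) :
    2 * Module.finrank K (LinearMap.ker (τ - 1)) = Fintype.card G := by
  have : FiniteDimensional K Q := e.symm.finiteDimensional
  have hconj : e.conj τ = LinearMap.mulLeft K (MonoidAlgebra.single g 1) := by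
    ext x
    simp [LinearEquiv.conj_apply, hτ]
  have hinv : τ * τ = 1 := by
    ext x
    apply e.injective
    simp only [Module.End.mul_apply, Module.End.one_apply, hτ, ← mul_assoc,
      MonoidAlgebra.single_mul_single, hg2, mul_one, ← MonoidAlgebra.one_def, one_mul]
  have h := two_mul_finrank_ker_sub_one_eq hinv
  rw [← LinearMap.trace_conj' τ e, hconj, MonoidAlgebra.trace_mulLeft_single_eq_zero hg,
    add_zero, e.finrank_eq, Module.finrank_eq_card_basis (MonoidAlgebra.basis G K)] at h
  exact_mod_cast h

/-- Let `G̃ ⊆ GL(2,ℂ)` be a finite subgroup containing `-I` and `I` a `G̃`-cluster.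
With `J = σ⁻¹(I)`, the induced map `ℂ[a,b,c]/J → ℂ[x,y]/I` is injective, its image is
the subring fixed by the automorphism induced by `-I`, and `dim_ℂ ℂ[a,b,c]/J = |G̃|/2`.
Moreover if `I ⊆ ⟨x,y⟩` then `J ⊆ ⟨a,b,c⟩`. -/
theorem stmt3 (Gt : Subgroup (GL (Fin 2) ℂ)) [Fintype Gt]
    (hneg : (-1 : GL (Fin 2) ℂ) ∈ Gt)
    (I : Ideal (MvPolynomial (Fin 2) ℂ))
    (hstab : ∀ g ∈ Gt, ∀ f ∈ I, actGL g f ∈ I)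
    (hreg : ∃ e : (MvPolynomial (Fin 2) ℂ ⧸ I) ≃ₗ[ℂ] MonoidAlgebra ℂ Gt,
      ∀ (g : Gt) (f : MvPolynomial (Fin 2) ℂ),
        e (Ideal.Quotient.mk I (actGL (g : GL (Fin 2) ℂ) f)) =
          MonoidAlgebra.single g (1 : ℂ) * e (Ideal.Quotient.mk I f)) :
    Function.Injective
      (Ideal.quotientMap I (sigmaHom : MvPolynomial (Fin 3) ℂ →+* MvPolynomial (Fin 2) ℂ)
        le_rfl) ∧
    (∀ f : MvPolynomial (Fin 2) ℂ,
      (Ideal.Quotient.mk I f ∈ Set.range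
          (Ideal.quotientMap I
            (sigmaHom : MvPolynomial (Fin 3) ℂ →+* MvPolynomial (Fin 2) ℂ) le_rfl)) ↔
        Ideal.Quotient.mk I (actGL (-1 : GL (Fin 2) ℂ) f) = Ideal.Quotient.mk I f) ∧
    2 * Module.finrank ℂ
        (MvPolynomial (Fin 3) ℂ ⧸ Ideal.comap
          (sigmaHom : MvPolynomial (Fin 3) ℂ →+* MvPolynomial (Fin 2) ℂ) I) =
      Fintype.card Gt ∧
    (I ≤ Ideal.span (Set.range (X : Fin 2 → MvPolynomial (Fin 2) ℂ)) →
      Ideal.comap (sigmaHom : MvPolynomial (Fin 3) ℂ →+* MvPolynomial (Fin 2) ℂ) I ≤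
        Ideal.span (Set.range (X : Fin 3 → MvPolynomial (Fin 3) ℂ))) := by
  obtain ⟨e, he⟩ := hreg
  have hI : I ≤ I.comap negX := fun f hf => actGL_neg_one (n := 2) ▸ hstab _ hneg f hf
  refine ⟨Ideal.quotientMap_injective, fun f => ?_, ?_,
    fun h => (Ideal.comap_mono h).trans comap_sigmaHom_idealOfVars.le⟩
  · rw [actGL_neg_one]
    exact mk_mem_range_quotientMap_sigmaHom_iff hI f
  · rw [finrank_quotient_comap_sigmaHom hI]
    refine two_mul_finrank_ker_sub_one_eq_card e (g := ⟨-1, hneg⟩) ?_ ?_ fun x => ?_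
    · norm_num [Subtype.ext_iff, Units.ext_iff, ← Matrix.ext_iff]
    · ext1; simp
    · obtain ⟨f, rfl⟩ := Ideal.Quotient.mk_surjective x
      simpa [actGL_neg_one] using he ⟨-1, hneg⟩ f
end

section
/- Let 𝔊 ⊆ GL(n,ℂ) be a finite subgroup acting on S = ℂ[X₁,…,Xₙ] by g·f = f ∘ g⁻¹, and let I ⊆ S be a 𝔊-cluster. Then the zero locus V(I) = {p ∈ ℂⁿ : f(p) = 0 for all f ∈ I} is nonempty and is a single 𝔊-orbit: there exists p ∈ V(I) such that V(I) = {g·p : g ∈ 𝔊}. -/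
/-!
`V(I)` is nonempty by the Nullstellensatz, since `S ⧸ I ≅ ℂ[𝔊]` is nonzero, and it is stable
under `𝔊` since `I` is. The `𝔊`-fixed vectors of the regular representation form a line, which
contains the image of `1`; hence every invariant polynomial is congruent to a constant modulo `I`
and so takes a single value on `V(I)`. As invariant polynomials of a finite group separate
distinct orbits, `V(I)` is a single orbit.
-/

open MvPolynomial

namespace MonoidAlgebra

variable {k G : Type*} [Group G]

lemma coeff_eq_coeff_one_of_forall_single_mul [Semiring k] {v : MonoidAlgebra k G}
    (hv : ∀ g, single g 1 * v = v) (g : G) : v.coeff g = v.coeff 1 := by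
  conv_lhs => rw [← hv g]
  rw [coeff_single_mul_apply, one_mul, inv_mul_cancel]

lemma exists_eq_smul_of_forall_single_mul [Field k] {u v : MonoidAlgebra k G}
    (hu : ∀ g, single g 1 * u = u) (hv : ∀ g, single g 1 * v = v) (hu0 : u ≠ 0) :
    ∃ c : k, v = c • u := by
  have hu1 : u.coeff 1 ≠ 0 := fun h =>
    hu0 <| by ext g; rw [coeff_eq_coeff_one_of_forall_single_mul hu g, h, coeff_zero]; rfl
  refine ⟨v.coeff 1 / u.coeff 1, ?_⟩
  ext g
  rw [coeff_smul_apply, coeff_eq_coeff_one_of_forall_single_mul hu g,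
    coeff_eq_coeff_one_of_forall_single_mul hv g, smul_eq_mul, div_mul_cancel₀ _ hu1]

end MonoidAlgebra

lemma Ideal.exists_sub_algebraMap_mem_of_fixed {k A G : Type*} [Field k] [CommRing A]
    [Algebra k A] [Group G] {I : Ideal A} (e : (A ⧸ I) ≃ₗ[k] MonoidAlgebra k G)
    (ρ : G → A →ₐ[k] A)
    (he : ∀ g f, e (Ideal.Quotient.mk I (ρ g f)) =
      MonoidAlgebra.single g 1 * e (Ideal.Quotient.mk I f))
    {H : A} (hH : ∀ g, ρ g H = H) : ∃ c : k, H - algebraMap k A c ∈ I := by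
  have : Nontrivial (A ⧸ I) := e.toEquiv.nontrivial
  have hfix : ∀ {f : A}, (∀ g, ρ g f = f) →
      ∀ g, MonoidAlgebra.single g 1 * e (Ideal.Quotient.mk I f) = e (Ideal.Quotient.mk I f) :=
    fun hf g => by rw [← he, hf]
  obtain ⟨c, hc⟩ := MonoidAlgebra.exists_eq_smul_of_forall_single_mul
    (hfix fun g => map_one (ρ g)) (hfix hH) (by simp)
  refine ⟨c, Ideal.Quotient.eq.1 (e.injective ?_)⟩
  rw [hc, ← map_smul, Ideal.Quotient.mk_algebraMap, Algebra.algebraMap_eq_smul_one, map_one]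

namespace MvPolynomial

variable {σ K : Type*} [Field K]

lemma exists_eval_eq_one_and_eval_eq_zero (q : σ → K) (F : Finset (σ → K)) (hq : q ∉ F) :
    ∃ h : MvPolynomial σ K, eval q h = 1 ∧ ∀ a ∈ F, eval a h = 0 := by
  classical
  induction F using Finset.induction_on with
  | empty => exact ⟨1, by simp, by simp⟩
  | @insert a F _ ih =>
    obtain ⟨i, hi⟩ := Function.ne_iff.mp (ne_of_mem_of_not_mem (Finset.mem_insert_self a F) hq)
    obtain ⟨h, hh1, hh0⟩ := ih fun hmem => hq (Finset.mem_insert_of_mem hmem)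
    refine ⟨C (q i - a i)⁻¹ * (X i - C (a i)) * h, ?_, fun b hb => ?_⟩
    · simp [hh1, inv_mul_cancel₀ (sub_ne_zero.mpr (Ne.symm hi))]
    · rcases Finset.mem_insert.mp hb with rfl | hb
      · simp
      · simp [hh0 b hb]

lemma zeroLocus_nonempty_of_ne_top [IsAlgClosed K] [Finite σ] {I : Ideal (MvPolynomial σ K)}
    (hI : I ≠ ⊤) : (zeroLocus K I).Nonempty := by
  obtain ⟨M, hM, hIM⟩ := Ideal.exists_le_maximal I hI
  obtain ⟨x, rfl⟩ := isMaximal_iff_eq_vanishingIdeal_singleton.1 hM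
  exact ⟨x, fun f hf => (mem_vanishingIdeal_singleton_iff x f).1 (hIM hf)⟩

lemma eval_eq_eval_of_fixed {G : Type*} [Group G] {I : Ideal (MvPolynomial σ K)}
    (e : (MvPolynomial σ K ⧸ I) ≃ₗ[K] MonoidAlgebra K G)
    (ρ : G → MvPolynomial σ K →ₐ[K] MvPolynomial σ K)
    (he : ∀ g f, e (Ideal.Quotient.mk I (ρ g f)) =
      MonoidAlgebra.single g 1 * e (Ideal.Quotient.mk I f))
    {H : MvPolynomial σ K} (hH : ∀ g, ρ g H = H) {p q : σ → K}
    (hp : ∀ f ∈ I, eval p f = 0) (hq : ∀ f ∈ I, eval q f = 0) : eval p H = eval q H := by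
  obtain ⟨c, hc⟩ := Ideal.exists_sub_algebraMap_mem_of_fixed e ρ he hH
  have hpc := hp _ hc
  have hqc := hq _ hc
  rw [map_sub, algebraMap_eq, eval_C, sub_eq_zero] at hpc hqc
  rw [hpc, hqc]

end MvPolynomial

lemma eval_actGL {n : ℕ} (g : GL (Fin n) ℂ) (p : Fin n → ℂ) (f : MvPolynomial (Fin n) ℂ) :
    eval p (actGL g f) =
      eval (((g⁻¹ : GL (Fin n) ℂ) : Matrix (Fin n) (Fin n) ℂ).mulVec p) f := by
  rw [actGL, aeval_eq_bind₁, eval, eval₂Hom_bind₁]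
  congr
  ext i
  simp [Matrix.mulVec, dotProduct]

lemma actGL_mul {n : ℕ} (g h : GL (Fin n) ℂ) : actGL (g * h) = (actGL g).comp (actGL h) := by
  refine MvPolynomial.algHom_ext fun i => ?_
  simp only [actGL, AlgHom.comp_apply, aeval_X, map_sum, map_smul, Finset.smul_sum, smul_smul,
    mul_inv_rev, Units.val_mul, Matrix.mul_apply, Finset.sum_smul]
  exact Finset.sum_comm

lemma exists_invariant_eval_ne {n : ℕ} (Gg : Subgroup (GL (Fin n) ℂ)) [Fintype Gg]
    {p q : Fin n → ℂ} (hpq : ∀ g ∈ Gg, (g : Matrix (Fin n) (Fin n) ℂ).mulVec p ≠ q) :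
    ∃ H : MvPolynomial (Fin n) ℂ, (∀ g : Gg, actGL g H = H) ∧ eval p H ≠ eval q H := by
  classical
  let orbit := Finset.univ.image fun g : Gg =>
    ((g : GL (Fin n) ℂ) : Matrix (Fin n) (Fin n) ℂ).mulVec p
  obtain ⟨h, hhq, horbit⟩ :=
    exists_eval_eq_one_and_eval_eq_zero q orbit (by simpa [orbit] using hpq)
  -- `1 - h` vanishes at `q` and is `1` on the orbit of `p`, and the product of its translates too.
  refine ⟨∏ g : Gg, actGL g (1 - h), fun g₀ => ?_, ?_⟩
  · rw [map_prod]
    refine Fintype.prod_equiv (Equiv.mulLeft g₀) _ _ fun g => ?_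
    rw [← AlgHom.comp_apply, ← actGL_mul]
    rfl
  · have hp : eval p (∏ g : Gg, actGL g (1 - h)) = 1 := by
      rw [map_prod]
      refine Finset.prod_eq_one fun g _ => ?_
      rw [eval_actGL, map_sub, map_one, sub_eq_self]
      exact horbit _ (Finset.mem_image.2 ⟨g⁻¹, Finset.mem_univ _, by simp⟩)
    have hq : eval q (∏ g : Gg, actGL g (1 - h)) = 0 := by
      rw [map_prod]
      exact Finset.prod_eq_zero (Finset.mem_univ 1) (by simp [eval_actGL, hhq])
    rw [hp, hq]
    exact one_ne_zero

/-- For a finite subgroup `𝔊 ⊆ GL(n,ℂ)` and a `𝔊`-cluster `I ⊆ ℂ[X₁,…,Xₙ]`, the zero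
locus `V(I)` is nonempty and is a single `𝔊`-orbit. -/
theorem stmt4 {n : ℕ} (Gg : Subgroup (GL (Fin n) ℂ)) [Fintype Gg]
    (I : Ideal (MvPolynomial (Fin n) ℂ))
    (hstab : ∀ g ∈ Gg, ∀ f ∈ I, actGL g f ∈ I)
    (hreg : ∃ e : (MvPolynomial (Fin n) ℂ ⧸ I) ≃ₗ[ℂ] MonoidAlgebra ℂ Gg,
      ∀ (g : Gg) (f : MvPolynomial (Fin n) ℂ),
        e (Ideal.Quotient.mk I (actGL (g : GL (Fin n) ℂ) f)) =
          MonoidAlgebra.single g (1 : ℂ) * e (Ideal.Quotient.mk I f)) :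
    ∃ p : Fin n → ℂ,
      (∀ f ∈ I, eval p f = 0) ∧
      {q : Fin n → ℂ | ∀ f ∈ I, eval q f = 0} =
        {q : Fin n → ℂ | ∃ g ∈ Gg,
          Matrix.mulVec ((g : GL (Fin n) ℂ) : Matrix (Fin n) (Fin n) ℂ) p = q} := by
  obtain ⟨e, he⟩ := hreg
  obtain ⟨p, hp⟩ :=
    zeroLocus_nonempty_of_ne_top (Ideal.Quotient.nontrivial_iff.1 e.toEquiv.nontrivial)
  refine ⟨p, hp, Set.Subset.antisymm (fun q hq => ?_) ?_⟩
  · by_contra hpq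
    obtain ⟨H, hH, hne⟩ := exists_invariant_eval_ne Gg fun g hg hgp => hpq ⟨g, hg, hgp⟩
    exact hne (eval_eq_eval_of_fixed e (fun g => actGL g) he hH hp hq)
  · rintro q ⟨g, hg, rfl⟩ f hf
    simpa [eval_actGL] using hp _ (hstab g⁻¹ (inv_mem hg) f hf)
end

section
/- Let 𝔊 ⊆ GL(n,ℂ) be a finite subgroup acting on S = ℂ[X₁,…,Xₙ] by g·f = f ∘ g⁻¹, and let I ⊆ S be a 𝔊-cluster with I ⊆ ⟨X₁,…,Xₙ⟩. Then every 𝔊-invariant polynomial with zero constant term belongs to I; equivalently, the ideal n_𝔊 of S generated by the non-constant 𝔊-invariant polynomials vanishing at the origin satisfies n_𝔊 ⊆ I. -/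
/-!
A left-invariant element of the regular representation `ℂ[𝔊]` has all its coefficients
equal, so these elements form a line. For an invariant `f` with `f(0) = 0`, the classes of `f` and
of `1` in `S/I ≅ ℂ[𝔊]` are both invariant, hence satisfy a relation `b • [f] = a • [1]`
with `a` the coefficient of `[f]` at the identity. Thus `b f - a ∈ I ⊆ ⟨X₁,…,Xₙ⟩`, and
comparing constant terms gives `a = 0`, i.e. `[f] = 0`.
-/

open MvPolynomial

/-- The ideal `n_𝔊` generated by the `𝔊`-invariant polynomials with zero constant term. -/
noncomputable def invIdeal {n : ℕ} (Gg : Subgroup (GL (Fin n) ℂ)) :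
    Ideal (MvPolynomial (Fin n) ℂ) :=
  Ideal.span {f | (∀ g ∈ Gg, actGL g f = f) ∧ constantCoeff f = 0}

namespace MonoidAlgebra

variable {k G : Type*} [Group G]

theorem coeff_eq_coeff_one_of_forall_single_mul_eq [Semiring k] {x : MonoidAlgebra k G}
    (hx : ∀ g : G, single g 1 * x = x) (g : G) : x.coeff g = x.coeff 1 := by
  simpa using (congrArg (coeff · g) (hx g)).symm

theorem eq_zero_of_forall_single_mul_eq [Semiring k] {x : MonoidAlgebra k G}
    (hx : ∀ g : G, single g 1 * x = x) (h1 : x.coeff 1 = 0) : x = 0 := by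
  ext g
  rw [coeff_eq_coeff_one_of_forall_single_mul_eq hx, h1]
  rfl

theorem smul_eq_smul_of_forall_single_mul_eq [CommSemiring k] {x y : MonoidAlgebra k G}
    (hx : ∀ g : G, single g 1 * x = x) (hy : ∀ g : G, single g 1 * y = y) :
    y.coeff 1 • x = x.coeff 1 • y := by
  ext g
  simp only [coeff_smul_apply, coeff_eq_coeff_one_of_forall_single_mul_eq hx g,
    coeff_eq_coeff_one_of_forall_single_mul_eq hy g, smul_eq_mul, mul_comm]

end MonoidAlgebra

theorem MvPolynomial.constantCoeff_eq_zero_of_mem_span_X {σ R : Type*} [CommSemiring R]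
    {p : MvPolynomial σ R} (hp : p ∈ Ideal.span (Set.range X)) : constantCoeff p = 0 := by
  suffices Ideal.span (Set.range X) ≤ RingHom.ker (constantCoeff (R := R) (σ := σ)) from this hp
  rw [Ideal.span_le]
  rintro _ ⟨i, rfl⟩
  exact constantCoeff_X R i

open MonoidAlgebra in
theorem stmt6_general {n : ℕ} (Gg : Subgroup (GL (Fin n) ℂ))
    (I : Ideal (MvPolynomial (Fin n) ℂ))
    (hreg : ∃ e : (MvPolynomial (Fin n) ℂ ⧸ I) ≃ₗ[ℂ] MonoidAlgebra ℂ Gg,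
      ∀ (g : Gg) (f : MvPolynomial (Fin n) ℂ),
        e (Ideal.Quotient.mk I (actGL (g : GL (Fin n) ℂ) f)) =
          MonoidAlgebra.single g (1 : ℂ) * e (Ideal.Quotient.mk I f))
    (hI : I ≤ Ideal.span (Set.range (X : Fin n → MvPolynomial (Fin n) ℂ))) :
    invIdeal Gg ≤ I := by
  obtain ⟨e, he⟩ := hreg
  set φ : MvPolynomial (Fin n) ℂ →ₗ[ℂ] MonoidAlgebra ℂ Gg :=
    e.toLinearMap ∘ₗ (Ideal.Quotient.mkₐ ℂ I).toLinearMap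
  have hker : ∀ p, φ p = 0 ↔ p ∈ I := fun p => by
    simp [φ, Ideal.Quotient.eq_zero_iff_mem]
  have hfix : ∀ p, (∀ g ∈ Gg, actGL g p = p) → ∀ g : Gg, single g 1 * φ p = φ p :=
    fun p hp g => by simpa [φ, hp g g.2] using (he g p).symm
  rw [invIdeal, Ideal.span_le]
  rintro f ⟨hf, hf0⟩
  have hprop := smul_eq_smul_of_forall_single_mul_eq (hfix f hf) (hfix 1 fun g _ => map_one _)
  have hmem : (φ 1).coeff 1 • f - (φ f).coeff 1 • 1 ∈ I := by
    rw [← hker, map_sub, map_smul, map_smul, hprop, sub_self]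
  have hcoeff : (φ f).coeff 1 = 0 := by
    simpa [smul_eq_C_mul, hf0] using constantCoeff_eq_zero_of_mem_span_X (hI hmem)
  exact (hker f).1 (eq_zero_of_forall_single_mul_eq (hfix f hf) hcoeff)

/-- For a finite subgroup `𝔊 ⊆ GL(n,ℂ)` and a `𝔊`-cluster `I ⊆ ⟨X₁,…,Xₙ⟩`, every
`𝔊`-invariant polynomial with zero constant term belongs to `I`, i.e. `n_𝔊 ⊆ I`. -/
theorem stmt6 {n : ℕ} (Gg : Subgroup (GL (Fin n) ℂ)) [Fintype Gg]
    (I : Ideal (MvPolynomial (Fin n) ℂ))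
    (hstab : ∀ g ∈ Gg, ∀ f ∈ I, actGL g f ∈ I)
    (hreg : ∃ e : (MvPolynomial (Fin n) ℂ ⧸ I) ≃ₗ[ℂ] MonoidAlgebra ℂ Gg,
      ∀ (g : Gg) (f : MvPolynomial (Fin n) ℂ),
        e (Ideal.Quotient.mk I (actGL (g : GL (Fin n) ℂ) f)) =
          MonoidAlgebra.single g (1 : ℂ) * e (Ideal.Quotient.mk I f))
    (hI : I ≤ Ideal.span (Set.range (X : Fin n → MvPolynomial (Fin n) ℂ))) :
    invIdeal Gg ≤ I :=
  stmt6_general Gg I hreg hI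
end

section
/- Let R be a commutative ring, τ a finite group whose order is invertible in R, Q an R-module equipped with an R-linear action of τ, and N any R-module, with τ acting on Q ⊗_R N through the first factor. Then the natural R-linear map Q^τ ⊗_R N → (Q ⊗_R N)^τ induced by the inclusion Q^τ ⊆ Q is an isomorphism. -/
/-! The averaging operator `e = |τ|⁻¹ ∑ₜ a t` is a projection of `Q` onto `Q^τ`, so `Q^τ` is a
direct summand and `Q^τ ⊗ N → Q ⊗ N` is injective, with image the range of the projection
`e ⊗ id`. But `e ⊗ id` is also the averaging operator of `Q ⊗ N`, whose range is `(Q ⊗ N)^τ`. -/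

/-- The submodule of invariants of a family of endomorphisms. -/
def invariantsOf {R Q τ : Type*} [CommRing R] [AddCommGroup Q] [Module R Q]
    (a : τ → Module.End R Q) : Submodule R Q where
  carrier := {x | ∀ t, a t x = x}
  add_mem' := by
    intro x y hx hy t
    rw [map_add, hx t, hy t]
  zero_mem' := by
    intro t
    rw [map_zero]
  smul_mem' := by
    intro c x hx t
    rw [map_smul, hx t]

namespace LinearMap.IsProj

variable {R M : Type*} [CommSemiring R] [AddCommMonoid M] [Module R M] {p : Submodule R M}
  {f : M →ₗ[R] M} (N : Type*) [AddCommMonoid N] [Module R N]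

theorem codRestrict_comp_subtype (h : IsProj p f) : h.codRestrict ∘ₗ p.subtype = LinearMap.id :=
  LinearMap.ext h.codRestrict_apply_cod

theorem rTensor_subtype_injective (h : IsProj p f) : Function.Injective (p.subtype.rTensor N) :=
  Function.LeftInverse.injective (g := h.codRestrict.rTensor N) fun y => by
    rw [← LinearMap.comp_apply, ← LinearMap.rTensor_comp, h.codRestrict_comp_subtype,
      LinearMap.rTensor_id, LinearMap.id_apply]

theorem rTensor (h : IsProj p f) : IsProj (range (p.subtype.rTensor N)) (f.rTensor N) where
  map_mem y := by
    rw [← h.subtype_comp_codRestrict, LinearMap.rTensor_comp]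
    exact LinearMap.mem_range_self _ _
  map_id := by
    rintro _ ⟨y, rfl⟩
    rw [← LinearMap.comp_apply, ← LinearMap.rTensor_comp, ← h.subtype_comp_codRestrict,
      LinearMap.comp_assoc, h.codRestrict_comp_subtype, LinearMap.comp_id]

end LinearMap.IsProj

namespace Representation

variable {k G V : Type*} [CommRing k] [Group G] [Fintype G] [Invertible (Fintype.card G : k)]
  [AddCommGroup V] [Module k V]

theorem averageMap_tprod_one (ρ : Representation k G V) (W : Type*) [AddCommGroup W]
    [Module k W] :
    averageMap (ρ.tprod 1 : Representation k G (TensorProduct k V W)) =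
      (averageMap ρ).rTensor W :=
  TensorProduct.ext' fun x y => smul_tprod_one_asModule ρ _ x y

end Representation

/-- Let `τ` be a finite group whose order is invertible in `R`, acting `R`-linearly on
`Q`, and let `N` be any `R`-module, `τ` acting on `Q ⊗_R N` through the first factor.
The natural map `Q^τ ⊗_R N → (Q ⊗_R N)^τ` induced by the inclusion `Q^τ ⊆ Q` is an
isomorphism: the map `Q^τ ⊗_R N → Q ⊗_R N` is injective with range `(Q ⊗_R N)^τ`. -/
theorem stmt12 {R Q N τ : Type*} [CommRing R] [AddCommGroup Q] [Module R Q]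
    [AddCommGroup N] [Module R N] [Group τ] [Finite τ]
    (hord : IsUnit ((Nat.card τ : R)))
    (a : τ →* Module.End R Q) :
    Function.Injective (LinearMap.rTensor N (invariantsOf (fun t => a t)).subtype) ∧
    LinearMap.range (LinearMap.rTensor N (invariantsOf (fun t => a t)).subtype) =
      invariantsOf (fun t => LinearMap.rTensor N (a t)) := by
  -- `invariantsOf` agrees definitionally with `Representation.invariants`, and `tprod a 1` with
  -- `t ↦ (a t).rTensor N`, so the Mathlib projections below are about the sets in the statement.
  have := Fintype.ofFinite τ
  have : Invertible (Fintype.card τ : R) := (Nat.card_eq_fintype_card (α := τ) ▸ hord).invertible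
  have hproj := Representation.isProj_averageMap a
  refine ⟨hproj.rTensor_subtype_injective N, ?_⟩
  have htensor := hproj.rTensor N
  rw [← Representation.averageMap_tprod_one] at htensor
  exact htensor.submodule_unique (Representation.isProj_averageMap (Representation.tprod a 1))
end

section
/- Fix n ≥ 2 and a primitive n-th root of unity ζ ∈ ℂ, and let the cyclic group of order n act on ℂ[a,b,c] by ℂ-algebra automorphisms with a chosen generator acting by a ↦ ζa, b ↦ ζ⁻¹b, c ↦ c. Then the subalgebra of invariant polynomials equals the ℂ-subalgebra generated by aⁿ, bⁿ, ab and c. -/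
/-!
Scaling the variables by `ζ, ζ⁻¹, 1` multiplies the monomial `aⁱ bʲ cᵏ` by `ζ^(i - j)`, so a
polynomial is invariant exactly when every monomial in its support has `i ≡ j [MOD n]`.  Such a
monomial factors as `(ab)^(i % n) (aⁿ)^(i / n) (bⁿ)^(j / n) cᵏ`, which gives one inclusion; the
other holds because the four generators are visibly invariant and the invariants form a subalgebra.
-/

open MvPolynomial

section DiagonalScaling

variable {σ R : Type*} [CommSemiring R]

theorem aeval_C_mul_X_monomial (c : σ → R) (d : σ →₀ ℕ) (r : R) :
    aeval (fun i => C (c i) * X i) (monomial d r)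
      = C (d.prod fun i k => c i ^ k) * monomial d r := by
  rw [aeval_monomial, monomial_eq, algebraMap_eq, map_finsuppProd C]
  simp only [mul_pow, Finsupp.prod_mul, C_pow]
  ring

theorem coeff_aeval_C_mul_X (c : σ → R) (f : MvPolynomial σ R) (d : σ →₀ ℕ) :
    coeff d (aeval (fun i => C (c i) * X i) f) = (d.prod fun i k => c i ^ k) * coeff d f := by
  classical
  induction f using MvPolynomial.induction_on' with
  | monomial u r =>
    rw [aeval_C_mul_X_monomial, coeff_C_mul, coeff_monomial]
    split_ifs with h <;> simp [h]
  | add p q hp hq => rw [map_add, coeff_add, hp, hq, coeff_add, mul_add]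

theorem aeval_C_mul_X_eq_self_iff [IsDomain R] (c : σ → R) (f : MvPolynomial σ R) :
    aeval (fun i => C (c i) * X i) f = f ↔ ∀ d ∈ f.support, (d.prod fun i k => c i ^ k) = 1 := by
  simp only [MvPolynomial.ext_iff, coeff_aeval_C_mul_X, mem_support_iff, mul_left_eq_self₀]
  exact forall_congr' fun d => or_iff_not_imp_right

end DiagonalScaling

theorem IsPrimitiveRoot.pow_mul_inv_pow_eq_one_iff {K : Type*} [Field K] {ζ : K} {n : ℕ}
    (hζ : IsPrimitiveRoot ζ n) (hn : n ≠ 0) (i j : ℕ) :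
    ζ ^ i * ζ⁻¹ ^ j = 1 ↔ i ≡ j [MOD n] := by
  have hζ₀ : ζ ≠ 0 := hζ.ne_zero hn
  rw [Nat.modEq_iff_dvd, dvd_sub_comm, ← hζ.zpow_eq_one_iff_dvd, zpow_sub₀ hζ₀, zpow_natCast,
    zpow_natCast, inv_pow, div_eq_mul_inv]

section CyclicAction

variable {R : Type*} [CommSemiring R]

theorem X_zero_pow_mul_X_one_pow_mem_adjoin {n i j : ℕ} (h : i ≡ j [MOD n]) :
    X 0 ^ i * X 1 ^ j ∈ Algebra.adjoin R
      ({X 0 ^ n, X 1 ^ n, X 0 * X 1, X 2} : Set (MvPolynomial (Fin 3) R)) := by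
  have hfactor : (X 0 ^ i * X 1 ^ j : MvPolynomial (Fin 3) R)
      = (X 0 * X 1) ^ (i % n) * (X 0 ^ n) ^ (i / n) * (X 1 ^ n) ^ (j / n) := by
    conv_lhs => rw [← Nat.mod_add_div i n, ← Nat.mod_add_div j n, ← h]
    ring
  rw [hfactor]
  refine mul_mem (mul_mem ?_ ?_) ?_ <;> exact pow_mem (Algebra.subset_adjoin (by simp)) _

theorem mem_adjoin_of_forall_mem_support {n : ℕ} {f : MvPolynomial (Fin 3) R}
    (hf : ∀ d ∈ f.support, d 0 ≡ d 1 [MOD n]) :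
    f ∈ Algebra.adjoin R
      ({X 0 ^ n, X 1 ^ n, X 0 * X 1, X 2} : Set (MvPolynomial (Fin 3) R)) := by
  rw [f.as_sum]
  refine Subalgebra.sum_mem _ fun d hd => ?_
  rw [monomial_eq, Finsupp.prod_fintype _ _ fun i => pow_zero _, Fin.prod_univ_three, ← mul_assoc]
  exact mul_mem (mul_mem (Subalgebra.algebraMap_mem _ _)
    (X_zero_pow_mul_X_one_pow_mem_adjoin (hf d hd)))
    (pow_mem (Algebra.subset_adjoin (by simp)) _)

variable {K : Type*} [Field K]

theorem aeval_cyclic_eq_self_iff {n : ℕ} (hn : n ≠ 0) {ζ : K} (hζ : IsPrimitiveRoot ζ n)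
    (f : MvPolynomial (Fin 3) K) :
    aeval ![C ζ * X 0, C ζ⁻¹ * X 1, X 2] f = f ↔ ∀ d ∈ f.support, d 0 ≡ d 1 [MOD n] := by
  have hdiag : ![C ζ * X 0, C ζ⁻¹ * X 1, X 2]
      = fun i => C (![ζ, ζ⁻¹, 1] i) * (X i : MvPolynomial (Fin 3) K) := by
    funext i; fin_cases i <;> simp
  rw [hdiag, aeval_C_mul_X_eq_self_iff]
  refine forall₂_congr fun d _ => ?_
  rw [Finsupp.prod_fintype _ _ fun i => pow_zero _, Fin.prod_univ_three]
  simpa using hζ.pow_mul_inv_pow_eq_one_iff hn (d 0) (d 1)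

theorem adjoin_le_equalizer_aeval_cyclic {n : ℕ} {ζ : K} (hζ : ζ ^ n = 1) (hζ₀ : ζ ≠ 0) :
    Algebra.adjoin K ({X 0 ^ n, X 1 ^ n, X 0 * X 1, X 2} : Set (MvPolynomial (Fin 3) K))
      ≤ AlgHom.equalizer (aeval ![C ζ * X 0, C ζ⁻¹ * X 1, X 2]) (AlgHom.id K _) := by
  refine AlgHom.adjoin_le_equalizer _ _ ?_
  rintro _ (rfl | rfl | rfl | rfl)
  · simp [mul_pow, ← C_pow, hζ]
  · simp [mul_pow, ← C_pow, hζ]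
  · simp only [AlgHom.coe_id, id_eq, map_mul, aeval_X, Matrix.cons_val_zero, Matrix.cons_val_one]
    rw [mul_mul_mul_comm, ← C_mul, mul_inv_cancel₀ hζ₀, C_1, one_mul]
  · simp

end CyclicAction

/-- Let the cyclic group of order `n` act on `ℂ[a,b,c]` with generator `a ↦ ζa`,
`b ↦ ζ⁻¹b`, `c ↦ c`, `ζ` a primitive `n`-th root of unity.  The subalgebra of invariant
polynomials equals the ℂ-subalgebra generated by `aⁿ`, `bⁿ`, `ab` and `c`. -/
theorem stmt15 (n : ℕ) (hn : 2 ≤ n) (ζ : ℂ) (hζ : IsPrimitiveRoot ζ n)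
    (f : MvPolynomial (Fin 3) ℂ) :
    aeval ![C ζ * X 0, C ζ⁻¹ * X 1, X 2] f = f ↔
      f ∈ Algebra.adjoin ℂ
        ({X 0 ^ n, X 1 ^ n, X 0 * X 1, X 2} : Set (MvPolynomial (Fin 3) ℂ)) := by
  have hn₀ : n ≠ 0 := by omega
  constructor
  · exact fun hf => mem_adjoin_of_forall_mem_support ((aeval_cyclic_eq_self_iff hn₀ hζ f).1 hf)
  · exact fun hf => adjoin_le_equalizer_aeval_cyclic hζ.pow_eq_one (hζ.ne_zero hn₀) hf
end

section
/- Fix n ≥ 2 and a primitive n-th root of unity ζ ∈ ℂ, and let the cyclic group C_n ≅ ℤ/nℤ act on ℂ[a,b,c] with a chosen generator acting by a ↦ ζa, b ↦ ζ⁻¹b, c ↦ c. An ideal J ⊆ ⟨a,b,c⟩ of ℂ[a,b,c] is a C_n-cluster if and only if there exist an integer k with 1 ≤ k ≤ n−1 and (s,t) ∈ ℂ² with (s,t) ≠ (0,0) such that J = ⟨s·a^k − t·b^{n−k}, c, a^{k+1}, b^{n−k+1}, ab⟩. -/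
/-!
The monomial `a^i b^j c^l` has weight `ζ^(i-j)` under the generator, and in the regular
representation `ℂ[ℤ/n]` each eigenspace of the shift is a line on which the coefficient at `0` is
injective.

If `J` is a cluster, the fixed monomials `c, ab, aⁿ, bⁿ` lie in `J` (as `J` has no constant term),
and `a^d, b^(n-d)`, having the same weight, are proportional modulo `J`. For the least `k ≥ 1`
with `a^(k+1) ∈ J`, also `b^(n-k+1) ∈ J`, so the relation `s aᵏ - t b^(n-k)` of weight `k` puts
the ideal of the statement inside `J`. Here `(s, t) ≠ 0`, for otherwise the `n`-dimensional
`ℂ[a,b,c] ⧸ J` would be spanned by the `n - 1` monomials `1, …, a^(k-1), b, …, b^(n-k-1)`; and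
the two ideals agree since the smaller one has codimension at most `n`.

Conversely, modulo that ideal the ring is spanned by `n` monomials of the pairwise distinct
weights `1, ζ, …, ζ^(n-1)`; sending each to a shift eigenvector with the same eigenvalue gives an
equivariant surjection onto `ℂ[ℤ/n]`, hence an isomorphism.
-/

open MvPolynomial

/-- The generator of the cyclic group action on `ℂ[a,b,c]`: `a ↦ ζa`, `b ↦ ζ⁻¹b`,
`c ↦ c`. -/
noncomputable def cycAct3 (ζ : ℂ) :
    MvPolynomial (Fin 3) ℂ →ₐ[ℂ] MvPolynomial (Fin 3) ℂ :=
  aeval ![C ζ * X 0, C ζ⁻¹ * X 1, X 2]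

theorem Ideal.exists_quotient_linearEquiv {K A V : Type*} [Field K] [CommRing A] [Algebra K A]
    [AddCommGroup V] [Module K V] [FiniteDimensional K V] {I : Ideal A}
    [Module.Finite K (A ⧸ I)] (hI : Module.finrank K (A ⧸ I) ≤ Module.finrank K V)
    (f : A →ₗ[K] V) (hf : ∀ x ∈ I, f x = 0) (hsurj : Function.Surjective f) :
    ∃ e : (A ⧸ I) ≃ₗ[K] V, ∀ x, e (Ideal.Quotient.mk I x) = f x := by
  let g : (A ⧸ I) →ₗ[K] V := (I.restrictScalars K).liftQ f hf ∘ₗ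
    (Submodule.Quotient.restrictScalarsEquiv K I).symm.toLinearMap
  have hg : ∀ x, g (Ideal.Quotient.mk I x) = f x := fun x => rfl
  have hgsurj : Function.Surjective g := fun v => by
    obtain ⟨x, rfl⟩ := hsurj v
    exact ⟨_, hg x⟩
  exact ⟨.ofBijective g (OrzechProperty.bijective_of_surjective_of_finrank_le g hgsurj hI), hg⟩

theorem Ideal.eq_of_le_of_finrank_le {K A : Type*} [Field K] [CommRing A] [Algebra K A]
    {I J : Ideal A} [Module.Finite K (A ⧸ I)] [FiniteDimensional K (A ⧸ J)] (hIJ : I ≤ J)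
    (hrank : Module.finrank K (A ⧸ I) ≤ Module.finrank K (A ⧸ J)) : I = J := by
  obtain ⟨e, he⟩ := Ideal.exists_quotient_linearEquiv hrank (Ideal.Quotient.mkₐ K J).toLinearMap
    (fun x hx => Ideal.Quotient.eq_zero_iff_mem.mpr (hIJ hx)) (Ideal.Quotient.mkₐ_surjective K J)
  refine hIJ.antisymm fun x hx => ?_
  rw [← Ideal.Quotient.eq_zero_iff_mem, ← e.map_eq_zero_iff, he]
  exact Ideal.Quotient.eq_zero_iff_mem.mpr hx

theorem MvPolynomial.linearMap_eq_zero_of_mem_span {σ R M : Type*} [CommSemiring R]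
    [AddCommMonoid M] [Module R M] (f : MvPolynomial σ R →ₗ[R] M) {S : Set (MvPolynomial σ R)}
    (hS : ∀ g ∈ S, ∀ m a, f (monomial m a * g) = 0) {x : MvPolynomial σ R}
    (hx : x ∈ Ideal.span S) : f x = 0 := by
  suffices ∀ r, f (r * x) = 0 by simpa using this 1
  induction hx using Submodule.span_induction with
  | mem g hg =>
    intro r
    induction r using MvPolynomial.induction_on' with
    | monomial m a => exact hS g hg m a
    | add p q hp hq => rw [add_mul, map_add, hp, hq, add_zero]
  | zero => simp
  | add y z _ _ hy hz => intro r; rw [mul_add, map_add, hy, hz, add_zero]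
  | smul a y _ hy => intro r; rw [smul_eq_mul, ← mul_assoc, hy]

theorem inv_pow_sub_eq_pow {M : Type*} [DivisionMonoid M] {ζ : M} {n d : ℕ} (h : ζ ^ n = 1)
    (hd : d ≤ n) : ζ⁻¹ ^ (n - d) = ζ ^ d := by
  rw [inv_pow, inv_eq_of_mul_eq_one_left (by rw [← pow_add, Nat.add_sub_cancel' hd, h])]

noncomputable section

namespace CyclicCluster

open AddMonoidAlgebra Finset Module

local notation "ℂ[a,b,c]" => MvPolynomial (Fin 3) ℂ

section RegularRepresentation

variable {n : ℕ}

theorem eq_zero_of_single_one_mul_eq_smul [NeZero n] {k : Type*} [Semiring k]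
    {f : AddMonoidAlgebra k (ZMod n)} {c : k} (hf : single 1 1 * f = c • f)
    (h0 : f.coeff 0 = 0) : f = 0 := by
  have hneg : ∀ j : ℕ, f.coeff (-(j : ZMod n)) = 0 := by
    intro j
    induction j with
    | zero => simpa using h0
    | succ j ih =>
      have := congrArg (fun g => g.coeff (-(j : ZMod n))) hf
      simp only [coeff_single_mul_apply, one_mul, AddMonoidAlgebra.coeff_smul_apply, ih,
        smul_zero] at this
      rw [← this, Nat.cast_succ, neg_add, add_comm]
  ext y
  simpa using hneg (-y).val

variable (n) in
/-- For `μ ^ n = 1` this is `n μ ^ (n - 1)` times the idempotent of the `μ`-eigenspace of the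
shift `single 1 1 * ·`. -/
def shiftEigenvector (μ : ℂ) : AddMonoidAlgebra ℂ (ZMod n) :=
  ∑ i ∈ range n, single 1 1 ^ i * algebraMap ℂ _ μ ^ (n - 1 - i)

theorem single_one_mul_shiftEigenvector {μ : ℂ} (hμ : μ ^ n = 1) :
    single 1 1 * shiftEigenvector n μ = μ • shiftEigenvector n μ := by
  have h := geom_sum₂_mul (single (1 : ZMod n) (1 : ℂ)) (algebraMap ℂ _ μ) n
  rw [single_pow, ← map_pow, hμ, one_pow, nsmul_eq_mul, mul_one, ZMod.natCast_self, map_one,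
    ← AddMonoidAlgebra.one_def, sub_self, mul_sub, sub_eq_zero] at h
  rw [Algebra.smul_def, mul_comm, mul_comm (algebraMap _ _ μ)]
  exact h

theorem coeff_zero_shiftEigenvector [NeZero n] (μ : ℂ) :
    (shiftEigenvector n μ).coeff 0 = μ ^ (n - 1) := by
  simp only [shiftEigenvector, single_pow, ← map_pow, AddMonoidAlgebra.coe_algebraMap,
    Function.comp_apply, single_mul_single, AddMonoidAlgebra.coeff_sum, coeff_single,
    Finsupp.finsetSum_apply]
  rw [Finset.sum_eq_single 0]
  · simp
  · intro i hi hi0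
    rw [Finsupp.single_apply, if_neg]
    simp only [nsmul_eq_mul, mul_one, mul_zero, add_zero, ZMod.natCast_eq_zero_iff]
    exact fun h => hi0 (Nat.eq_zero_of_dvd_of_lt h (mem_range.mp hi))
  · simp [NeZero.pos n]

theorem finrank_addMonoidAlgebra_zmod [NeZero n] : finrank ℂ (AddMonoidAlgebra ℂ (ZMod n)) = n := by
  rw [finrank_eq_card_basis (AddMonoidAlgebra.basis (ZMod n) ℂ), ZMod.card]

theorem span_range_shiftEigenvector [NeZero n] {ζ : ℂ} (hζ : IsPrimitiveRoot ζ n) :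
    Submodule.span ℂ (Set.range fun d : Fin n => shiftEigenvector n (ζ ^ (d : ℕ))) = ⊤ := by
  have hζ0 : ζ ≠ 0 := hζ.ne_zero (NeZero.ne n)
  refine LinearIndependent.span_eq_top_of_card_eq_finrank' ?_
    (by rw [Fintype.card_fin, finrank_addMonoidAlgebra_zmod])
  refine Module.End.eigenvectors_linearIndependent' (LinearMap.mulLeft ℂ (single 1 1))
    (fun d : Fin n => ζ ^ (d : ℕ)) (fun d d' h => Fin.ext (hζ.pow_inj d.2 d'.2 h)) _ fun d => ?_
  refine ⟨Module.End.mem_eigenspace_iff.mpr ?_, fun h => ?_⟩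
  · exact single_one_mul_shiftEigenvector
      (by rw [← pow_mul, mul_comm, pow_mul, hζ.pow_eq_one, one_pow])
  · have := congrArg (fun f => f.coeff 0) h
    simp only [coeff_zero_shiftEigenvector] at this
    exact pow_ne_zero _ (pow_ne_zero _ hζ0) this

end RegularRepresentation

theorem cycAct3_X_zero (ζ : ℂ) : cycAct3 ζ (X 0) = C ζ * X 0 := aeval_X _ _

theorem cycAct3_X_one (ζ : ℂ) : cycAct3 ζ (X 1) = C ζ⁻¹ * X 1 := aeval_X _ _

theorem cycAct3_X_two (ζ : ℂ) : cycAct3 ζ (X 2) = X 2 := aeval_X _ _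

theorem cycAct3_X_zero_mul_X_one {ζ : ℂ} (hζ : ζ ≠ 0) : cycAct3 ζ (X 0 * X 1) = X 0 * X 1 := by
  rw [map_mul, cycAct3_X_zero, cycAct3_X_one, mul_mul_mul_comm, ← C_mul, mul_inv_cancel₀ hζ, C_1,
    one_mul]

theorem cycAct3_monomial (ζ : ℂ) (m : Fin 3 →₀ ℕ) (r : ℂ) :
    cycAct3 ζ (monomial m r) = (ζ ^ m 0 * ζ⁻¹ ^ m 1) • monomial m r := by
  simp only [monomial_eq, Finsupp.prod_fintype _ _ (fun _ => pow_zero _), Fin.prod_univ_three,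
    map_mul, map_pow, algHom_C, cycAct3_X_zero, cycAct3_X_one, cycAct3_X_two, smul_eq_C_mul,
    mul_pow, algebraMap_eq]
  ring

theorem cycAct3_X_zero_pow (ζ : ℂ) (i : ℕ) : cycAct3 ζ (X 0 ^ i) = ζ ^ i • X 0 ^ i := by
  rw [map_pow, cycAct3_X_zero, mul_pow, ← C_pow, smul_eq_C_mul]

theorem cycAct3_X_one_pow (ζ : ℂ) (j : ℕ) : cycAct3 ζ (X 1 ^ j) = ζ⁻¹ ^ j • X 1 ^ j := by
  rw [map_pow, cycAct3_X_one, mul_pow, ← C_pow, smul_eq_C_mul]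

section ClusterMap

variable (n k : ℕ) (ζ s t : ℂ)

def clusterIdeal : Ideal ℂ[a,b,c] :=
  Ideal.span {C s * X 0 ^ k - C t * X 1 ^ (n - k), X 2, X 0 ^ (k + 1), X 1 ^ (n - k + 1), X 0 * X 1}

/-- The normal-form monomials `1, a, …, a^k, b, …, b^(n-k)` of the cluster ideal get coefficient
`1`, except `a^k ↦ t` and `b^(n-k) ↦ s`, chosen so that `s a^k - t b^(n-k)` is sent to zero. -/
def clusterCoeff (m : Fin 3 →₀ ℕ) : ℂ :=
  if m 2 = 0 ∧ (m 0 = 0 ∨ m 1 = 0) ∧ m 0 ≤ k ∧ m 1 ≤ n - k then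
    if m 0 = k then t else if m 1 = n - k then s else 1
  else 0

def clusterMap : ℂ[a,b,c] →ₗ[ℂ] AddMonoidAlgebra ℂ (ZMod n) :=
  (basisMonomials (Fin 3) ℂ).constr ℂ fun m =>
    clusterCoeff n k s t m • shiftEigenvector n (ζ ^ m 0 * ζ⁻¹ ^ m 1)

variable {n k ζ s t}

theorem clusterCoeff_eq_zero {m : Fin 3 →₀ ℕ}
    (h : m 2 ≠ 0 ∨ m 0 ≠ 0 ∧ m 1 ≠ 0 ∨ k < m 0 ∨ n - k < m 1) : clusterCoeff n k s t m = 0 := by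
  rw [clusterCoeff, if_neg]
  omega

theorem clusterCoeff_eq_one {m : Fin 3 →₀ ℕ} (h2 : m 2 = 0) (h01 : m 0 = 0 ∨ m 1 = 0)
    (h0 : m 0 < k) (h1 : m 1 < n - k) : clusterCoeff n k s t m = 1 := by
  rw [clusterCoeff, if_pos (by omega), if_neg h0.ne, if_neg h1.ne]

theorem clusterCoeff_single_zero : clusterCoeff n k s t (Finsupp.single 0 k) = t := by
  simp [clusterCoeff]

theorem clusterCoeff_single_one (hk : k ≠ 0) :
    clusterCoeff n k s t (Finsupp.single 1 (n - k)) = s := by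
  simp [clusterCoeff, hk.symm]

theorem clusterMap_monomial (m : Fin 3 →₀ ℕ) (r : ℂ) :
    clusterMap n k ζ s t (monomial m r) =
      (r * clusterCoeff n k s t m) • shiftEigenvector n (ζ ^ m 0 * ζ⁻¹ ^ m 1) := by
  have : monomial m r = r • basisMonomials (Fin 3) ℂ m := by
    rw [coe_basisMonomials, smul_monomial, smul_eq_mul, mul_one]
  rw [this, map_smul, clusterMap, Module.Basis.constr_basis, smul_smul]

theorem clusterMap_cycAct3 (hζ : ζ ^ n = 1) (f : ℂ[a,b,c]) :
    clusterMap n k ζ s t (cycAct3 ζ f) = single 1 1 * clusterMap n k ζ s t f := by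
  induction f using MvPolynomial.induction_on' with
  | monomial m r =>
    have hw : (ζ ^ m 0 * ζ⁻¹ ^ m 1) ^ n = 1 := by
      rw [mul_pow, ← pow_mul, ← pow_mul, mul_comm (m 0), mul_comm (m 1), pow_mul, pow_mul,
        inv_pow, hζ]
      simp
    rw [cycAct3_monomial, map_smul, clusterMap_monomial, mul_smul_comm,
      single_one_mul_shiftEigenvector hw, smul_comm]
  | add p q hp hq => rw [map_add, map_add, hp, hq, map_add, mul_add]

theorem clusterMap_eq_zero_of_mem (hζ : ζ ^ n = 1) (hk : 1 ≤ k) (hkn : k ≤ n - 1) {x : ℂ[a,b,c]}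
    (hx : x ∈ clusterIdeal n k s t) : clusterMap n k ζ s t x = 0 := by
  have hmon : ∀ m' : Fin 3 →₀ ℕ, (∀ m, clusterCoeff n k s t (m + m') = 0) →
      ∀ m r, clusterMap n k ζ s t (monomial m r * monomial m' 1) = 0 := by
    intro m' h m r
    rw [monomial_mul, mul_one, clusterMap_monomial, h, mul_zero, zero_smul]
  refine linearMap_eq_zero_of_mem_span _ ?_ hx
  rintro g (rfl | rfl | rfl | rfl | rfl)
  · intro m r
    rw [C_mul_X_pow_eq_monomial, C_mul_X_pow_eq_monomial, mul_sub, monomial_mul, monomial_mul,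
      map_sub, clusterMap_monomial, clusterMap_monomial]
    by_cases hm : m = 0
    · subst hm
      rw [zero_add, zero_add, clusterCoeff_single_zero, clusterCoeff_single_one (by omega)]
      simp [inv_pow_sub_eq_pow hζ (by omega : k ≤ n), mul_right_comm r s t]
    · obtain ⟨i, hi⟩ := Finsupp.ne_iff.mp hm
      rw [clusterCoeff_eq_zero, clusterCoeff_eq_zero] <;> fin_cases i <;> simp at hi ⊢ <;> omega
  · exact hmon _ fun m => clusterCoeff_eq_zero (by simp)
  · rw [X_pow_eq_monomial]; exact hmon _ fun m => clusterCoeff_eq_zero (by simp; omega)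
  · rw [X_pow_eq_monomial]; exact hmon _ fun m => clusterCoeff_eq_zero (by simp; omega)
  · rw [X, X, monomial_mul, one_mul]; exact hmon _ fun m => clusterCoeff_eq_zero (by simp)

theorem clusterMap_surjective [NeZero n] (hζ : IsPrimitiveRoot ζ n) (hk : 1 ≤ k)
    (hkn : k ≤ n - 1) (hst : (s, t) ≠ (0, 0)) : Function.Surjective (clusterMap n k ζ s t) := by
  have h1 := hζ.pow_eq_one
  rw [← LinearMap.range_eq_top, eq_top_iff, ← span_range_shiftEigenvector hζ, Submodule.span_le]
  rintro _ ⟨⟨d, hdn⟩, rfl⟩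
  dsimp only
  rcases lt_trichotomy d k with hd | rfl | hd
  · refine ⟨monomial (Finsupp.single 0 d) 1, ?_⟩
    rw [clusterMap_monomial, clusterCoeff_eq_one (by simp) (by simp) (by simpa) (by simp; omega)]
    simp
  · by_cases ht : t = 0
    · have hs : s ≠ 0 := by rintro rfl; exact hst (by rw [ht])
      refine ⟨monomial (Finsupp.single 1 (n - d)) s⁻¹, ?_⟩
      rw [clusterMap_monomial, clusterCoeff_single_one (by omega), inv_mul_cancel₀ hs]
      simp [inv_pow_sub_eq_pow h1 hdn.le]
    · refine ⟨monomial (Finsupp.single 0 d) t⁻¹, ?_⟩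
      rw [clusterMap_monomial, clusterCoeff_single_zero, inv_mul_cancel₀ ht]
      simp
  · refine ⟨monomial (Finsupp.single 1 (n - d)) 1, ?_⟩
    rw [clusterMap_monomial, clusterCoeff_eq_one (by simp) (by simp) (by simp; omega)
      (by simp; omega)]
    simp [inv_pow_sub_eq_pow h1 hdn.le]

end ClusterMap

section Spanning

variable {J : Ideal ℂ[a,b,c]}

theorem submodule_eq_top_of_X_pow_mem (h2 : X 2 ∈ J) (h01 : X 0 * X 1 ∈ J)
    (S : Submodule ℂ (ℂ[a,b,c] ⧸ J)) (ha : ∀ i, Ideal.Quotient.mk J (X 0 ^ i) ∈ S)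
    (hb : ∀ j, Ideal.Quotient.mk J (X 1 ^ j) ∈ S) : S = ⊤ := by
  have hmon : ∀ m : Fin 3 →₀ ℕ, Ideal.Quotient.mk J (monomial m 1) ∈ S := by
    intro m
    have hm : monomial m (1 : ℂ) = X 0 ^ m 0 * X 1 ^ m 1 * X 2 ^ m 2 := by
      simp [monomial_eq, Finsupp.prod_fintype, Fin.prod_univ_three]
    by_cases hm2 : m 2 = 0
    · by_cases hm0 : m 0 = 0
      · simpa [hm, hm0, hm2] using hb (m 1)
      by_cases hm1 : m 1 = 0
      · simpa [hm, hm1, hm2] using ha (m 0)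
      rw [Ideal.Quotient.eq_zero_iff_mem.mpr (hm ▸ J.mul_mem_right _
        (J.mem_of_dvd (mul_dvd_mul (dvd_pow_self _ hm0) (dvd_pow_self _ hm1)) h01))]
      exact S.zero_mem
    · rw [Ideal.Quotient.eq_zero_iff_mem.mpr
        (hm ▸ J.mul_mem_left _ (J.pow_mem_of_mem h2 _ (Nat.pos_of_ne_zero hm2)))]
      exact S.zero_mem
  rw [eq_top_iff]
  rintro y -
  obtain ⟨x, rfl⟩ := Ideal.Quotient.mk_surjective y
  induction x using MvPolynomial.induction_on' with
  | monomial m r =>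
    have := S.smul_mem r (hmon m)
    rwa [← Ideal.Quotient.mkₐ_eq_mk ℂ, ← map_smul, smul_monomial, smul_eq_mul, mul_one] at this
  | add p q hp hq => rw [map_add]; exact S.add_mem hp hq

theorem finite_quotient_and_finrank_le {K L : ℕ} (r : ℂ) (hK : K ≠ 0) (h2 : X 2 ∈ J)
    (h01 : X 0 * X 1 ∈ J) (ha : X 0 ^ (K + 1) ∈ J) (hb : X 1 ^ (L + 1) ∈ J)
    (hrel : X 0 ^ K - C r * X 1 ^ L ∈ J) :
    Module.Finite ℂ (ℂ[a,b,c] ⧸ J) ∧ finrank ℂ (ℂ[a,b,c] ⧸ J) ≤ K + L := by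
  classical
  let T : Finset (ℂ[a,b,c] ⧸ J) := (range K).image (fun i => Ideal.Quotient.mk J (X 0 ^ i)) ∪
    (Icc 1 L).image (fun j => Ideal.Quotient.mk J (X 1 ^ j))
  have hmk0 {p : ℂ[a,b,c]} (hp : p ∈ J) : Ideal.Quotient.mk J p ∈ Submodule.span ℂ (T : Set _) := by
    rw [Ideal.Quotient.eq_zero_iff_mem.mpr hp]
    exact Submodule.zero_mem _
  have hlow : ∀ i < K, Ideal.Quotient.mk J (X 0 ^ i) ∈ Submodule.span ℂ (T : Set _) :=
    fun i hi => Submodule.subset_span (mem_union_left _ (mem_image_of_mem _ (mem_range.mpr hi)))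
  have hb' : ∀ j, Ideal.Quotient.mk J (X 1 ^ j) ∈ Submodule.span ℂ (T : Set _) := by
    intro j
    rcases Nat.eq_zero_or_pos j with rfl | hj
    · simpa using hlow 0 (Nat.pos_of_ne_zero hK)
    by_cases hjL : j ≤ L
    · exact Submodule.subset_span (mem_union_right _ (mem_image_of_mem _ (mem_Icc.mpr ⟨hj, hjL⟩)))
    · exact hmk0 (J.pow_mem_of_pow_mem hb (by omega))
  have hT : Submodule.span ℂ (T : Set (ℂ[a,b,c] ⧸ J)) = ⊤ := by
    refine submodule_eq_top_of_X_pow_mem h2 h01 _ (fun i => ?_) hb'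
    rcases lt_trichotomy i K with hi | rfl | hi
    · exact hlow i hi
    · have : Ideal.Quotient.mk J (X 0 ^ i) = r • Ideal.Quotient.mk J (X 1 ^ L) := by
        rw [← sub_eq_zero, ← Ideal.Quotient.mkₐ_eq_mk ℂ, ← map_smul, ← map_sub, smul_eq_C_mul]
        exact Ideal.Quotient.eq_zero_iff_mem.mpr hrel
      rw [this]
      exact Submodule.smul_mem _ r (hb' L)
    · exact hmk0 (J.pow_mem_of_pow_mem ha hi)
  refine ⟨⟨⟨T, hT⟩⟩, ?_⟩
  calc finrank ℂ (ℂ[a,b,c] ⧸ J) = Set.finrank ℂ (T : Set (ℂ[a,b,c] ⧸ J)) := by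
        rw [Set.finrank, hT, finrank_top]
    _ ≤ T.card := finrank_span_finset_le_card T
    _ ≤ (range K).card + (Icc 1 L).card :=
        (card_union_le _ _).trans (add_le_add card_image_le card_image_le)
    _ = K + L := by simp

end Spanning

def IsCluster (n : ℕ) (ζ : ℂ) (J : Ideal ℂ[a,b,c]) : Prop :=
  (∀ f ∈ J, cycAct3 ζ f ∈ J) ∧ ∃ e : (ℂ[a,b,c] ⧸ J) ≃ₗ[ℂ] AddMonoidAlgebra ℂ (ZMod n),
    ∀ f, e (Ideal.Quotient.mk J (cycAct3 ζ f)) = single 1 1 * e (Ideal.Quotient.mk J f)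

section Backward

variable {n k : ℕ} {ζ s t : ℂ}

theorem finite_quotient_clusterIdeal (hk : 1 ≤ k) (hkn : k ≤ n - 1) (hst : (s, t) ≠ (0, 0)) :
    Module.Finite ℂ (ℂ[a,b,c] ⧸ clusterIdeal n k s t) ∧
      finrank ℂ (ℂ[a,b,c] ⧸ clusterIdeal n k s t) ≤ n := by
  have hrel : C s * X 0 ^ k - C t * X 1 ^ (n - k) ∈ clusterIdeal n k s t :=
    Ideal.subset_span (by simp)
  have h2 : X 2 ∈ clusterIdeal n k s t := Ideal.subset_span (by simp)
  have ha : X 0 ^ (k + 1) ∈ clusterIdeal n k s t := Ideal.subset_span (by simp)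
  have hb : X 1 ^ (n - k + 1) ∈ clusterIdeal n k s t := Ideal.subset_span (by simp)
  have h01 : X 0 * X 1 ∈ clusterIdeal n k s t := Ideal.subset_span (by simp)
  by_cases hs : s = 0
  · have ht : t ≠ 0 := by rintro rfl; exact hst (by rw [hs])
    have hb' : X 1 ^ (n - k - 1 + 1) ∈ clusterIdeal n k s t := by
      rw [Nat.sub_add_cancel (by omega)]
      simpa [hs, ht] using (clusterIdeal n k s t).mul_mem_left (C (-t⁻¹)) hrel
    have := finite_quotient_and_finrank_le (K := k + 1) (L := n - k - 1) 0 (by omega) h2 h01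
      ((clusterIdeal n k s t).pow_mem_of_pow_mem ha (by omega)) hb' (by simpa using ha)
    exact ⟨this.1, this.2.trans (by omega)⟩
  · have hrel' : X 0 ^ k - C (s⁻¹ * t) * X 1 ^ (n - k) ∈ clusterIdeal n k s t := by
      have := (clusterIdeal n k s t).mul_mem_left (C s⁻¹) hrel
      rwa [mul_sub, ← mul_assoc, ← mul_assoc, ← C_mul, ← C_mul, inv_mul_cancel₀ hs, C_1,
        one_mul] at this
    have := finite_quotient_and_finrank_le (L := n - k) _ (by omega) h2 h01 ha hb hrel'
    exact ⟨this.1, this.2.trans (by omega)⟩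

theorem isCluster_clusterIdeal [NeZero n] (hζ : IsPrimitiveRoot ζ n) (hk : 1 ≤ k) (hkn : k ≤ n - 1)
    (hst : (s, t) ≠ (0, 0)) : IsCluster n ζ (clusterIdeal n k s t) := by
  obtain ⟨hfin, hrank⟩ := finite_quotient_clusterIdeal hk hkn hst
  obtain ⟨e, he⟩ := Ideal.exists_quotient_linearEquiv
    (hrank.trans finrank_addMonoidAlgebra_zmod.ge) (clusterMap n k ζ s t)
    (fun _ => clusterMap_eq_zero_of_mem hζ.pow_eq_one hk hkn) (clusterMap_surjective hζ hk hkn hst)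
  have hequiv : ∀ f, e (Ideal.Quotient.mk _ (cycAct3 ζ f)) =
      single 1 1 * e (Ideal.Quotient.mk _ f) := fun f => by
    rw [he, he, clusterMap_cycAct3 hζ.pow_eq_one]
  refine ⟨fun f hf => ?_, e, hequiv⟩
  rw [← Ideal.Quotient.eq_zero_iff_mem, ← e.map_eq_zero_iff, hequiv,
    Ideal.Quotient.eq_zero_iff_mem.mpr hf, map_zero, mul_zero]

end Backward

section Forward

variable {n : ℕ} [NeZero n] {ζ : ℂ} {J : Ideal ℂ[a,b,c]}
  {ψ : ℂ[a,b,c] →ₗ[ℂ] AddMonoidAlgebra ℂ (ZMod n)}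

theorem mem_of_cycAct3_eq_smul (hψ : ∀ f, ψ (cycAct3 ζ f) = single 1 1 * ψ f)
    (hker : ∀ x, ψ x = 0 ↔ x ∈ J) {x : ℂ[a,b,c]} {z : ℂ} (hx : cycAct3 ζ x = z • x)
    (h0 : (ψ x).coeff 0 = 0) : x ∈ J :=
  (hker x).mp (eq_zero_of_single_one_mul_eq_smul (by rw [← hψ, hx, map_smul]) h0)

theorem smul_sub_smul_mem (hψ : ∀ f, ψ (cycAct3 ζ f) = single 1 1 * ψ f)
    (hker : ∀ x, ψ x = 0 ↔ x ∈ J) {x y : ℂ[a,b,c]} {z : ℂ} (hx : cycAct3 ζ x = z • x)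
    (hy : cycAct3 ζ y = z • y) : (ψ y).coeff 0 • x - (ψ x).coeff 0 • y ∈ J := by
  refine mem_of_cycAct3_eq_smul hψ hker (z := z) ?_ ?_
  · rw [map_sub, map_smul, map_smul, hx, hy, smul_comm _ z, smul_comm _ z, smul_sub]
  · simp [mul_comm]

theorem mem_of_cycAct3_eq_self (hψ : ∀ f, ψ (cycAct3 ζ f) = single 1 1 * ψ f)
    (hker : ∀ x, ψ x = 0 ↔ x ∈ J) (hJ : J ≤ Ideal.span (Set.range X)) {x : ℂ[a,b,c]}
    (hx : cycAct3 ζ x = x) (h0 : constantCoeff x = 0) : x ∈ J := by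
  have hx' : cycAct3 ζ x = (1 : ℂ) • x := by rw [hx, one_smul]
  have hmem := smul_sub_smul_mem hψ hker hx' (y := 1) (by rw [map_one, one_smul])
  have hcc : J ≤ RingHom.ker constantCoeff :=
    hJ.trans (Ideal.span_le.mpr (by rintro _ ⟨i, rfl⟩; simp))
  refine mem_of_cycAct3_eq_smul hψ hker hx' ?_
  simpa [h0] using hcc hmem

theorem relation_mem (hψ : ∀ f, ψ (cycAct3 ζ f) = single 1 1 * ψ f)
    (hker : ∀ x, ψ x = 0 ↔ x ∈ J) (hζ : ζ ^ n = 1) {d : ℕ} (hd : d ≤ n) :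
    C ((ψ (X 1 ^ (n - d))).coeff 0) * X 0 ^ d - C ((ψ (X 0 ^ d)).coeff 0) * X 1 ^ (n - d) ∈ J := by
  simpa only [smul_eq_C_mul] using smul_sub_smul_mem hψ hker (cycAct3_X_zero_pow ζ d)
    (by rw [cycAct3_X_one_pow, inv_pow_sub_eq_pow hζ hd])

theorem X_one_pow_mem_of_X_zero_pow_not_mem (hψ : ∀ f, ψ (cycAct3 ζ f) = single 1 1 * ψ f)
    (hker : ∀ x, ψ x = 0 ↔ x ∈ J) (hζ : ζ ^ n = 1) (h01 : X 0 * X 1 ∈ J) {d : ℕ} (hd : d < n)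
    (ha : X 0 ^ (d + 1) ∉ J) : X 1 ^ (n - d) ∈ J := by
  by_contra hb
  have hs : (ψ (X 1 ^ (n - d))).coeff 0 ≠ 0 :=
    fun h => hb (mem_of_cycAct3_eq_smul hψ hker (cycAct3_X_one_pow ζ _) h)
  have hrel := relation_mem hψ hker hζ hd.le
  generalize (ψ (X 1 ^ (n - d))).coeff 0 = s at hs hrel
  generalize (ψ (X 0 ^ d)).coeff 0 = t at hrel
  have hab : X 0 * X 1 ^ (n - d) ∈ J :=
    J.mem_of_dvd (mul_dvd_mul_left _ (dvd_pow_self _ (by omega))) h01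
  have hsa : C s * X 0 ^ (d + 1) ∈ J := by
    convert J.add_mem (J.mul_mem_left (X 0) hrel) (J.mul_mem_left (C t) hab) using 1
    ring
  refine ha ?_
  simpa [← mul_assoc, ← C_mul, hs] using J.mul_mem_left (C s⁻¹) hsa

theorem fixed_monomials_mem (hψ : ∀ f, ψ (cycAct3 ζ f) = single 1 1 * ψ f)
    (hker : ∀ x, ψ x = 0 ↔ x ∈ J) (hJ : J ≤ Ideal.span (Set.range X)) (hζ : IsPrimitiveRoot ζ n) :
    X 2 ∈ J ∧ X 0 * X 1 ∈ J ∧ X 0 ^ n ∈ J ∧ X 1 ^ n ∈ J := by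
  have hfix : ∀ x, cycAct3 ζ x = x → constantCoeff x = 0 → x ∈ J :=
    fun _ => mem_of_cycAct3_eq_self hψ hker hJ
  refine ⟨hfix _ (cycAct3_X_two ζ) (by simp),
    hfix _ (cycAct3_X_zero_mul_X_one (hζ.ne_zero (NeZero.ne n))) (by simp), hfix _ ?_ ?_,
    hfix _ ?_ ?_⟩
  · rw [cycAct3_X_zero_pow, hζ.pow_eq_one, one_smul]
  · simp [NeZero.ne n]
  · rw [cycAct3_X_one_pow, inv_pow, hζ.pow_eq_one, inv_one, one_smul]
  · simp [NeZero.ne n]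

theorem exists_X_pow_mem (hψ : ∀ f, ψ (cycAct3 ζ f) = single 1 1 * ψ f)
    (hker : ∀ x, ψ x = 0 ↔ x ∈ J) (hζ : ζ ^ n = 1) (hn : 2 ≤ n) (h01 : X 0 * X 1 ∈ J)
    (ha : X 0 ^ n ∈ J) (hb : X 1 ^ n ∈ J) :
    ∃ k, 1 ≤ k ∧ k ≤ n - 1 ∧ X 0 ^ (k + 1) ∈ J ∧ X 1 ^ (n - k + 1) ∈ J := by
  classical
  have hex : ∃ k, 1 ≤ k ∧ X 0 ^ (k + 1) ∈ J :=
    ⟨n - 1, by omega, by rwa [Nat.sub_add_cancel (by omega)]⟩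
  obtain ⟨k, ⟨hk, hak⟩, hmin⟩ : ∃ k, (1 ≤ k ∧ X 0 ^ (k + 1) ∈ J) ∧
      ∀ j < k, ¬(1 ≤ j ∧ X 0 ^ (j + 1) ∈ J) :=
    ⟨Nat.find hex, Nat.find_spec hex, fun _ => Nat.find_min hex⟩
  have hkn : k ≤ n - 1 := by
    by_contra h
    exact hmin (n - 1) (by omega) ⟨by omega, by rwa [Nat.sub_add_cancel (by omega)]⟩
  refine ⟨k, hk, hkn, hak, ?_⟩
  rcases hk.eq_or_lt with rfl | hk1
  · rwa [Nat.sub_add_cancel (by omega)]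
  · have hak' : X 0 ^ (k - 1 + 1) ∉ J := by
      rw [Nat.sub_add_cancel hk]
      exact fun h => hmin (k - 1) (by omega) ⟨by omega, by rwa [Nat.sub_add_cancel hk]⟩
    have := X_one_pow_mem_of_X_zero_pow_not_mem hψ hker hζ h01 (by omega) hak'
    rwa [show n - (k - 1) = n - k + 1 by omega] at this

end Forward

theorem IsCluster.exists_eq_clusterIdeal {n : ℕ} {ζ : ℂ} {J : Ideal ℂ[a,b,c]} (hn : 2 ≤ n)
    (hζ : IsPrimitiveRoot ζ n) (hJ : J ≤ Ideal.span (Set.range X)) (h : IsCluster n ζ J) :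
    ∃ k, 1 ≤ k ∧ k ≤ n - 1 ∧ ∃ s t : ℂ, (s, t) ≠ (0, 0) ∧ J = clusterIdeal n k s t := by
  have : NeZero n := ⟨by omega⟩
  obtain ⟨-, e, he⟩ := h
  have : Module.Finite ℂ (ℂ[a,b,c] ⧸ J) := .equiv e.symm
  have hrank : finrank ℂ (ℂ[a,b,c] ⧸ J) = n := e.finrank_eq.trans finrank_addMonoidAlgebra_zmod
  let ψ := e.toLinearMap ∘ₗ (Ideal.Quotient.mkₐ ℂ J).toLinearMap
  have hψ : ∀ f, ψ (cycAct3 ζ f) = single 1 1 * ψ f := he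
  have hker : ∀ x, ψ x = 0 ↔ x ∈ J := fun x => by simp [ψ, Ideal.Quotient.eq_zero_iff_mem]
  obtain ⟨h2, h01, ha, hb⟩ := fixed_monomials_mem hψ hker hJ hζ
  obtain ⟨k, hk, hkn, hak, hbk⟩ := exists_X_pow_mem hψ hker hζ.pow_eq_one hn h01 ha hb
  have hrel := relation_mem hψ hker hζ.pow_eq_one (d := k) (by omega)
  set s := (ψ (X 1 ^ (n - k))).coeff 0
  set t := (ψ (X 0 ^ k)).coeff 0
  have hst : (s, t) ≠ (0, 0) := by
    intro h0
    have hs : X 1 ^ (n - k - 1 + 1) ∈ J := by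
      rw [Nat.sub_add_cancel (by omega)]
      exact mem_of_cycAct3_eq_smul hψ hker (cycAct3_X_one_pow ζ _) (congrArg Prod.fst h0)
    have ht : X 0 ^ k ∈ J :=
      mem_of_cycAct3_eq_smul hψ hker (cycAct3_X_zero_pow ζ _) (congrArg Prod.snd h0)
    have := (finite_quotient_and_finrank_le 0 (by omega) h2 h01 hak hs (by simpa using ht)).2
    omega
  have hle : clusterIdeal n k s t ≤ J := by
    rw [clusterIdeal, Ideal.span_le]
    rintro _ (rfl | rfl | rfl | rfl | rfl)
    exacts [hrel, h2, hak, hbk, h01]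
  obtain ⟨_, hrankI⟩ := finite_quotient_clusterIdeal hk hkn hst
  exact ⟨k, hk, hkn, s, t, hst, (Ideal.eq_of_le_of_finrank_le hle (hrankI.trans hrank.ge)).symm⟩

end CyclicCluster

end

/-- For the cyclic group `C_n ≅ ℤ/nℤ` acting on `ℂ[a,b,c]` with generator `a ↦ ζa`,
`b ↦ ζ⁻¹b`, `c ↦ c` (`ζ` a primitive `n`-th root of unity), an ideal `J ⊆ ⟨a,b,c⟩` is a
`C_n`-cluster (stable under the action, with `ℂ[a,b,c]/J` isomorphic as a module over
the group algebra to the regular representation `ℂ[ℤ/nℤ]`) iff it has the form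
`⟨s·aᵏ - t·b^{n-k}, c, a^{k+1}, b^{n-k+1}, ab⟩` for some `1 ≤ k ≤ n-1` and
`(s,t) ≠ (0,0)`. -/
theorem stmt17 (n : ℕ) (hn : 2 ≤ n) (ζ : ℂ) (hζ : IsPrimitiveRoot ζ n)
    (J : Ideal (MvPolynomial (Fin 3) ℂ))
    (hJ : J ≤ Ideal.span (Set.range (X : Fin 3 → MvPolynomial (Fin 3) ℂ))) :
    ((∀ f ∈ J, cycAct3 ζ f ∈ J) ∧
      ∃ e : (MvPolynomial (Fin 3) ℂ ⧸ J) ≃ₗ[ℂ] AddMonoidAlgebra ℂ (ZMod n),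
        ∀ f : MvPolynomial (Fin 3) ℂ,
          e (Ideal.Quotient.mk J (cycAct3 ζ f)) =
            AddMonoidAlgebra.single (1 : ZMod n) (1 : ℂ) * e (Ideal.Quotient.mk J f))
    ↔
    ∃ k : ℕ, 1 ≤ k ∧ k ≤ n - 1 ∧ ∃ s t : ℂ, (s, t) ≠ (0, 0) ∧
      J = Ideal.span {C s * X 0 ^ k - C t * X 1 ^ (n - k), X 2,
        X 0 ^ (k + 1), X 1 ^ (n - k + 1), X 0 * X 1} := by
  have : NeZero n := ⟨by omega⟩
  constructor
  · exact CyclicCluster.IsCluster.exists_eq_clusterIdeal hn hζ hJ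
  · rintro ⟨k, hk, hkn, s, t, hst, rfl⟩
    exact CyclicCluster.isCluster_clusterIdeal hζ hk hkn hst
end

section
/- Fix n ≥ 2, an integer k with 1 ≤ k ≤ n−1, and (p,q) ∈ ℂ² with (p,q) ≠ (0,0). Then the preimage under σ of the ideal ⟨p·x^{2k} − q·y^{2n−2k}, xy, x^{2k+1}, y^{2n−2k+1}⟩ of ℂ[x,y] is the ideal ⟨p·a^k − q·b^{n−k}, c, a^{k+1}, b^{n−k+1}, ab⟩ of ℂ[a,b,c]. -/
/-!
Write `I` for the ideal of `ℂ[x,y]`, `J` for the ideal of `ℂ[a,b,c]` and `m = n - k`.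
The map `σ` sends the monomial `aⁱ bʲ cˡ` to `x^(2i+l) y^(2j+l)`, and the only monomials
sent to pure powers of `x` (resp. `y`) are the `aⁱ` (resp. `bʲ`); so the coefficient of `aⁱ`
in `f` is the coefficient of `x^(2i)` in `σ f`, and similarly for `bʲ`. On `I` the
functionals "coefficient of `xˢ`" (`s < 2k`), "coefficient of `yᵗ`" (`t < 2m`) and
`q·coeff(x^(2k)) + p·coeff(y^(2m))` vanish, since they kill every multiple of every
generator. Hence for `σ f ∈ I` the only monomials outside `⟨c, a^(k+1), b^(m+1), ab⟩`
occurring in `f` are `aᵏ` and `bᵐ`, with coefficients proportional to `(p, -q)`, so `f ∈ J`.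
-/

open MvPolynomial

theorem Ideal.map_eq_zero_of_mem_span {A M : Type*} [CommSemiring A] [AddCommMonoid M]
    (φ : A →+ M) {S : Set A} (hS : ∀ s ∈ S, ∀ r, φ (r * s) = 0) {a : A}
    (ha : a ∈ Ideal.span S) : φ a = 0 := by
  suffices ∀ r, φ (r * a) = 0 by simpa using this 1
  induction ha using Submodule.span_induction with
  | mem s hs => exact hS s hs
  | zero => simp
  | add x y _ _ hx hy => intro r; simp [mul_add, hx, hy]
  | smul c x _ hx => intro r; simpa [mul_assoc] using hx (r * c)

theorem exists_eq_mul_of_mul_add_mul_eq_zero {K : Type*} [Field K] {p q u v : K}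
    (hpq : (p, q) ≠ (0, 0)) (h : q * u + p * v = 0) : ∃ l, u = l * p ∧ v = -(l * q) := by
  rcases eq_or_ne p 0 with rfl | hp
  · have hq : q ≠ 0 := fun hq => hpq (by rw [hq])
    refine ⟨-v / q, ?_, by field_simp⟩
    simpa [hq] using h
  · refine ⟨u / p, by field_simp, ?_⟩
    field_simp
    linear_combination h

section idealXY

variable {R : Type*} [CommRing R] {a b : ℕ} {p q : R}

variable (a b p q) in
noncomputable def idealXY : Ideal (MvPolynomial (Fin 2) R) :=
  Ideal.span {C p * X 0 ^ a - C q * X 1 ^ b, X 0 * X 1, X 0 ^ (a + 1), X 1 ^ (b + 1)}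

theorem map_eq_zero_of_mem_idealXY {M : Type*} [AddCommMonoid M]
    (φ : MvPolynomial (Fin 2) R →+ M)
    (h₁ : ∀ r, φ (r * (monomial (Finsupp.single 0 a) p - monomial (Finsupp.single 1 b) q)) = 0)
    (h₂ : ∀ r, φ (r * monomial (Finsupp.single 0 1 + Finsupp.single 1 1) 1) = 0)
    (h₃ : ∀ r, φ (r * monomial (Finsupp.single 0 (a + 1)) 1) = 0)
    (h₄ : ∀ r, φ (r * monomial (Finsupp.single 1 (b + 1)) 1) = 0)
    {h : MvPolynomial (Fin 2) R} (hh : h ∈ idealXY a b p q) : φ h = 0 := by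
  rw [idealXY, C_mul_X_pow_eq_monomial, C_mul_X_pow_eq_monomial, X_pow_eq_monomial,
    X_pow_eq_monomial, X, X, monomial_mul, mul_one] at hh
  refine Ideal.map_eq_zero_of_mem_span φ ?_ hh
  simpa only [Set.mem_insert_iff, Set.mem_singleton_iff, forall_eq_or_imp, forall_eq] using
    ⟨h₁, h₂, h₃, h₄⟩

theorem coeff_single_zero_eq_zero_of_mem_idealXY (hb : 0 < b) {h : MvPolynomial (Fin 2) R}
    (hh : h ∈ idealXY a b p q) {s : ℕ} (hs : s < a) : coeff (Finsupp.single 0 s) h = 0 := by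
  refine map_eq_zero_of_mem_idealXY (coeffAddMonoidHom _) ?_ ?_ ?_ ?_ hh <;> intro r <;>
  simp [coeff_mul_monomial', mul_sub, Finsupp.le_def, Fin.forall_fin_two, hb.ne', hs.not_ge,
    hs.not_gt]

theorem coeff_single_one_eq_zero_of_mem_idealXY (ha : 0 < a) {h : MvPolynomial (Fin 2) R}
    (hh : h ∈ idealXY a b p q) {t : ℕ} (ht : t < b) : coeff (Finsupp.single 1 t) h = 0 := by
  refine map_eq_zero_of_mem_idealXY (coeffAddMonoidHom _) ?_ ?_ ?_ ?_ hh <;> intro r <;>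
  simp [coeff_mul_monomial', mul_sub, Finsupp.le_def, Fin.forall_fin_two, ha.ne', ht.not_ge,
    ht.not_gt]

theorem mul_coeff_add_mul_coeff_eq_zero_of_mem_idealXY (ha : 0 < a) (hb : 0 < b)
    {h : MvPolynomial (Fin 2) R} (hh : h ∈ idealXY a b p q) :
    q * coeff (Finsupp.single 0 a) h + p * coeff (Finsupp.single 1 b) h = 0 := by
  refine map_eq_zero_of_mem_idealXY
    (q • coeffAddMonoidHom (Finsupp.single 0 a) + p • coeffAddMonoidHom (Finsupp.single 1 b))
    ?_ ?_ ?_ ?_ hh <;> intro r <;>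
  simp [coeff_mul_monomial', mul_sub, Finsupp.le_def, Fin.forall_fin_two, ha.ne', hb.ne',
    mul_left_comm q, mul_comm q, mul_left_comm p]

end idealXY

theorem mem_span_monomials_of_coeff_single_eq_zero {R : Type*} [CommSemiring R] {k m : ℕ}
    {g : MvPolynomial (Fin 3) R} (h₀ : ∀ i ≤ k, coeff (Finsupp.single 0 i) g = 0)
    (h₁ : ∀ j ≤ m, coeff (Finsupp.single 1 j) g = 0) :
    g ∈ Ideal.span {X 2, X 0 ^ (k + 1), X 1 ^ (m + 1), X 0 * X 1} := by
  have hmon : ({X 2, X 0 ^ (k + 1), X 1 ^ (m + 1), X 0 * X 1} : Set (MvPolynomial (Fin 3) R)) =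
      (fun s => monomial s 1) '' {Finsupp.single 2 1, Finsupp.single 0 (k + 1),
        Finsupp.single 1 (m + 1), Finsupp.single 0 1 + Finsupp.single 1 1} := by
    rw [X_pow_eq_monomial, X_pow_eq_monomial, X, X, X, monomial_mul, mul_one]
    simp only [Set.image_insert_eq, Set.image_singleton]
  rw [hmon, mem_ideal_span_monomial_image]
  intro d hd
  by_contra! hno
  simp only [Set.mem_insert_iff, Set.mem_singleton_iff, forall_eq_or_imp, forall_eq,
    Finsupp.single_le_iff, not_le] at hno
  obtain ⟨hd₂, hd₀, hd₁, hd₀₁⟩ := hno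
  rcases Nat.eq_zero_or_pos (d 0) with h | h
  · have hd_eq : d = Finsupp.single 1 (d 1) := by ext i; fin_cases i <;> simp <;> omega
    exact mem_support_iff.1 hd (hd_eq ▸ h₁ _ (by omega))
  · have hd₁' : d 1 = 0 := by
      by_contra h'
      exact hd₀₁ fun i => by fin_cases i <;> simp <;> omega
    have hd_eq : d = Finsupp.single 0 (d 0) := by ext i; fin_cases i <;> simp <;> omega
    exact mem_support_iff.1 hd (hd_eq ▸ h₀ _ (by omega))

noncomputable def sigmaWeight (d : Fin 3 →₀ ℕ) : Fin 2 →₀ ℕ :=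
  Finsupp.single 0 (2 * d 0 + d 2) + Finsupp.single 1 (2 * d 1 + d 2)

theorem sigmaHom_monomial (d : Fin 3 →₀ ℕ) (r : ℂ) :
    sigmaHom (monomial d r) = monomial (sigmaWeight d) r := by
  rw [sigmaHom, aeval_monomial, Finsupp.prod_fintype _ _ (by simp), Fin.prod_univ_three,
    sigmaWeight, monomial_add_single, ← C_mul_X_pow_eq_monomial]
  simp only [Matrix.cons_val, algebraMap_eq]
  ring

theorem coeff_sigmaHom_sigmaWeight {d₀ : Fin 3 →₀ ℕ}
    (h : ∀ d, sigmaWeight d = sigmaWeight d₀ → d = d₀) (f : MvPolynomial (Fin 3) ℂ) :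
    coeff (sigmaWeight d₀) (sigmaHom f) = coeff d₀ f := by
  classical
  induction f using induction_on' with
  | monomial d r =>
    rw [sigmaHom_monomial, coeff_monomial, coeff_monomial]
    exact if_congr ⟨h d, fun hd => hd ▸ rfl⟩ rfl rfl
  | add f g hf hg => rw [map_add, coeff_add, coeff_add, hf, hg]

theorem eq_single_of_sigmaWeight_eq {i : Fin 3} (hi : i ≠ 2) (j : ℕ) {d : Fin 3 →₀ ℕ}
    (h : sigmaWeight d = sigmaWeight (Finsupp.single i j)) : d = Finsupp.single i j := by
  have h0 := DFunLike.congr_fun h 0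
  have h1 := DFunLike.congr_fun h 1
  ext l
  fin_cases i <;> simp at hi <;> fin_cases l <;> simp [sigmaWeight] at h0 h1 ⊢ <;> omega

theorem coeff_sigmaHom_single_zero (f : MvPolynomial (Fin 3) ℂ) (i : ℕ) :
    coeff (Finsupp.single 0 (2 * i)) (sigmaHom f) = coeff (Finsupp.single 0 i) f := by
  have hw : sigmaWeight (Finsupp.single 0 i) = Finsupp.single 0 (2 * i) := by
    ext l; fin_cases l <;> simp [sigmaWeight]
  rw [← hw]
  exact coeff_sigmaHom_sigmaWeight (fun _ => eq_single_of_sigmaWeight_eq (by decide) i) f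

theorem coeff_sigmaHom_single_one (f : MvPolynomial (Fin 3) ℂ) (j : ℕ) :
    coeff (Finsupp.single 1 (2 * j)) (sigmaHom f) = coeff (Finsupp.single 1 j) f := by
  have hw : sigmaWeight (Finsupp.single 1 j) = Finsupp.single 1 (2 * j) := by
    ext l; fin_cases l <;> simp [sigmaWeight]
  rw [← hw]
  exact coeff_sigmaHom_sigmaWeight (fun _ => eq_single_of_sigmaWeight_eq (by decide) j) f

noncomputable def idealABC {R : Type*} [CommRing R] (k m : ℕ) (p q : R) :
    Ideal (MvPolynomial (Fin 3) R) :=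
  Ideal.span {C p * X 0 ^ k - C q * X 1 ^ m, X 2, X 0 ^ (k + 1), X 1 ^ (m + 1), X 0 * X 1}

theorem idealABC_le_comap_sigmaHom (k m : ℕ) (p q : ℂ) :
    idealABC k m p q ≤ Ideal.comap sigmaHom (idealXY (2 * k) (2 * m) p q) := by
  rw [idealABC, Ideal.span_le]
  simp only [Set.insert_subset_iff, Set.singleton_subset_iff, SetLike.mem_coe, Ideal.mem_comap]
  simp only [sigmaHom, map_sub, map_mul, map_pow, aeval_C, aeval_X, algebraMap_eq,
    Matrix.cons_val, ← pow_mul, idealXY]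
  refine ⟨Ideal.subset_span (by simp), Ideal.subset_span (by simp), ?_, ?_, ?_⟩
  · rw [show (X 0 : MvPolynomial (Fin 2) ℂ) ^ (2 * (k + 1)) = X 0 * X 0 ^ (2 * k + 1) by ring]
    exact Ideal.mul_mem_left _ _ (Ideal.subset_span (by simp))
  · rw [show (X 1 : MvPolynomial (Fin 2) ℂ) ^ (2 * (m + 1)) = X 1 * X 1 ^ (2 * m + 1) by ring]
    exact Ideal.mul_mem_left _ _ (Ideal.subset_span (by simp))
  · rw [← mul_pow, sq]
    exact Ideal.mul_mem_right _ _ (Ideal.subset_span (by simp))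

theorem comap_sigmaHom_le_idealABC {k m : ℕ} (hk : 0 < k) (hm : 0 < m) {p q : ℂ}
    (hpq : (p, q) ≠ (0, 0)) :
    Ideal.comap sigmaHom (idealXY (2 * k) (2 * m) p q) ≤ idealABC k m p q := by
  intro f hf
  rw [Ideal.mem_comap] at hf
  have hf₀ : ∀ i < k, coeff (Finsupp.single 0 i) f = 0 := fun i hi => by
    rw [← coeff_sigmaHom_single_zero]
    exact coeff_single_zero_eq_zero_of_mem_idealXY (by omega) hf (by omega)
  have hf₁ : ∀ j < m, coeff (Finsupp.single 1 j) f = 0 := fun j hj => by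
    rw [← coeff_sigmaHom_single_one]
    exact coeff_single_one_eq_zero_of_mem_idealXY (by omega) hf (by omega)
  obtain ⟨l, hu, hv⟩ := exists_eq_mul_of_mul_add_mul_eq_zero hpq (by
    simpa only [coeff_sigmaHom_single_zero, coeff_sigmaHom_single_one] using
      mul_coeff_add_mul_coeff_eq_zero_of_mem_idealXY (by omega) (by omega) hf)
  have hrest : f - C l * (C p * X 0 ^ k - C q * X 1 ^ m) ∈
      Ideal.span {X 2, X 0 ^ (k + 1), X 1 ^ (m + 1), X 0 * X 1} := by
    refine mem_span_monomials_of_coeff_single_eq_zero (fun i hi => ?_) (fun j hj => ?_)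
    · rcases hi.lt_or_eq with hi | rfl
      · simp [coeff_C_mul, coeff_X_pow, Finsupp.single_eq_single_iff, hf₀ i hi, hi.ne', hk.ne',
          hm.ne']
      · simp [coeff_C_mul, coeff_X_pow, Finsupp.single_eq_single_iff, hu, hk.ne']
    · rcases hj.lt_or_eq with hj | rfl
      · simp [coeff_C_mul, coeff_X_pow, Finsupp.single_eq_single_iff, hf₁ j hj, hj.ne', hk.ne',
          hm.ne']
      · simp [coeff_C_mul, coeff_X_pow, Finsupp.single_eq_single_iff, hv, hm.ne']
  rw [← sub_add_cancel f (C l * _)]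
  exact add_mem (Ideal.span_mono (Set.subset_insert _ _) hrest)
    (Ideal.mul_mem_left _ _ (Ideal.subset_span (Set.mem_insert _ _)))

theorem comap_sigmaHom_idealXY {k m : ℕ} (hk : 0 < k) (hm : 0 < m) {p q : ℂ}
    (hpq : (p, q) ≠ (0, 0)) :
    Ideal.comap sigmaHom (idealXY (2 * k) (2 * m) p q) = idealABC k m p q :=
  le_antisymm (comap_sigmaHom_le_idealABC hk hm hpq) (idealABC_le_comap_sigmaHom k m p q)

theorem stmt18_general (n k : ℕ) (hk1 : 1 ≤ k) (hk2 : k ≤ n - 1)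
    (p q : ℂ) (hpq : (p, q) ≠ (0, 0)) :
    Ideal.comap sigmaHom
      (Ideal.span ({C p * X 0 ^ (2 * k) - C q * X 1 ^ (2 * n - 2 * k), X 0 * X 1,
        X 0 ^ (2 * k + 1), X 1 ^ (2 * n - 2 * k + 1)} : Set (MvPolynomial (Fin 2) ℂ))) =
    Ideal.span ({C p * X 0 ^ k - C q * X 1 ^ (n - k), X 2,
        X 0 ^ (k + 1), X 1 ^ (n - k + 1), X 0 * X 1} : Set (MvPolynomial (Fin 3) ℂ)) := by
  obtain ⟨m, hm, rfl⟩ : ∃ m, 0 < m ∧ n = k + m := ⟨n - k, by omega, by omega⟩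
  rw [show 2 * (k + m) - 2 * k = 2 * m by omega, Nat.add_sub_cancel_left]
  exact comap_sigmaHom_idealXY hk1 hm hpq

/-- For `n ≥ 2`, `1 ≤ k ≤ n-1` and `(p,q) ≠ (0,0)`,
`σ⁻¹(⟨p·x^{2k} - q·y^{2n-2k}, xy, x^{2k+1}, y^{2n-2k+1}⟩)
  = ⟨p·aᵏ - q·b^{n-k}, c, a^{k+1}, b^{n-k+1}, ab⟩`. -/
theorem stmt18 (n k : ℕ) (hn : 2 ≤ n) (hk1 : 1 ≤ k) (hk2 : k ≤ n - 1)
    (p q : ℂ) (hpq : (p, q) ≠ (0, 0)) :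
    Ideal.comap sigmaHom
      (Ideal.span ({C p * X 0 ^ (2 * k) - C q * X 1 ^ (2 * n - 2 * k), X 0 * X 1,
        X 0 ^ (2 * k + 1), X 1 ^ (2 * n - 2 * k + 1)} : Set (MvPolynomial (Fin 2) ℂ))) =
    Ideal.span ({C p * X 0 ^ k - C q * X 1 ^ (n - k), X 2,
        X 0 ^ (k + 1), X 1 ^ (n - k + 1), X 0 * X 1} : Set (MvPolynomial (Fin 3) ℂ)) :=
  stmt18_general n k hk1 hk2 p q hpq
end
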